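/- arXiv:2009.04606 — 7 statements merged into one kernel-verified Lean document; each statement's English description precedes it below -/
import Mathlib

section
/- If ℓ' ≤ ℓ and n ∈ ℕ, then the Turán graph T_{ℓ·⌈n/ℓ'⌉, ℓ} contains a non-induced copy of the Turán graph T_{n,ℓ'}. -/
/-- A graph `H` contains a non-induced copy of `G`: an injection mapping edges to edges. -/
def HasCopy {α β : Type*} (G : SimpleGraph α) (H : SimpleGraph β) : Prop :=
  ∃ f : α ↪ β, ∀ a b, G.Adj a b → H.Adj (f a) (f b)

/-!
Write `i = ℓ' q + r` with `r < ℓ'` and send `i` to `ℓ q + r`. Since `ℓ' ≤ ℓ`, this keeps the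
residue `r`, now taken mod `ℓ`, so it maps the parts of `T_{n,ℓ'}` into distinct parts of
`T_{·,ℓ}`; it is injective because it also keeps the quotient `q`, and for `i < n` we have
`q < ⌈n/ℓ'⌉`, so the image lies below `ℓ ⌈n/ℓ'⌉`.
-/

def padBlocks (a b i : ℕ) : ℕ := i % a + b * (i / a)

section padBlocks

variable {a b : ℕ}

lemma padBlocks_mod (ha : 0 < a) (hab : a ≤ b) (i : ℕ) : padBlocks a b i % b = i % a := by
  rw [padBlocks, Nat.add_mul_mod_self_left]
  exact Nat.mod_eq_of_lt ((Nat.mod_lt i ha).trans_le hab)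

lemma padBlocks_div (ha : 0 < a) (hab : a ≤ b) (i : ℕ) : padBlocks a b i / b = i / a := by
  rw [padBlocks, Nat.add_mul_div_left _ _ (ha.trans_le hab),
    Nat.div_eq_of_lt ((Nat.mod_lt i ha).trans_le hab), Nat.zero_add]

lemma padBlocks_injective (ha : 0 < a) (hab : a ≤ b) : Function.Injective (padBlocks a b) := by
  intro i j h
  rw [← Nat.div_add_mod i a, ← Nat.div_add_mod j a, ← padBlocks_div ha hab,
    ← padBlocks_mod ha hab, h, padBlocks_div ha hab, padBlocks_mod ha hab]

lemma padBlocks_lt (ha : 0 < a) (hab : a ≤ b) {i n : ℕ} (hi : i < n) :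
    padBlocks a b i < b * ((n + a - 1) / a) := by
  have hq : i / a + 1 ≤ (n + a - 1) / a := by
    rw [← Nat.add_div_right _ ha]
    exact Nat.div_le_div_right (by omega)
  calc padBlocks a b i < b + b * (i / a) := by
        have := Nat.mod_lt i ha
        unfold padBlocks
        omega
    _ = b * (i / a + 1) := by ring
    _ ≤ b * ((n + a - 1) / a) := Nat.mul_le_mul_left _ hq

end padBlocks

/-- If `ℓ' ≤ ℓ`, then the Turán graph `T_{ℓ·⌈n/ℓ'⌉, ℓ}` contains a non-induced copy of the
Turán graph `T_{n,ℓ'}`. -/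
theorem stmt1 (ℓ' ℓ n : ℕ) (hpos : 0 < ℓ') (hle : ℓ' ≤ ℓ) :
    HasCopy (SimpleGraph.turanGraph n ℓ')
      (SimpleGraph.turanGraph (ℓ * ((n + ℓ' - 1) / ℓ')) ℓ) := by
  refine ⟨⟨fun i => ⟨padBlocks ℓ' ℓ i, padBlocks_lt hpos hle i.isLt⟩, fun i j h => ?_⟩, ?_⟩
  · exact Fin.ext (padBlocks_injective hpos hle (Fin.mk.inj h))
  · intro i j hij
    change padBlocks ℓ' ℓ i % ℓ ≠ padBlocks ℓ' ℓ j % ℓ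
    rwa [padBlocks_mod hpos hle, padBlocks_mod hpos hle]
end

section
/- For every ℓ ∈ ℕ₊, m ∈ ℕ and k ∈ ℕ₊ there exists n ∈ ℕ with the following property: for every k-uniform hypergraph H and every function f : V(H) → [ℓ] such that every fiber f⁻¹(i) has size at least n, there exist a set Q of weak compositions of k of length ℓ and a subset W ⊆ V(H) with every fiber of f restricted to W of size at least m, such that for every k-element subset e ⊆ W, e is an edge of H if and only if the tuple (|e ∩ f⁻¹(j)|)_{j∈[ℓ]} belongs to Q. -/
/-!
Ramsey's theorem for `k`-sets of a finite linear order is proved through prehomogeneous sets,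
on which the colour of a `(k+1)`-set depends only on its minimum.

For the partite version, enumerate `N` vertices of every fiber by the positions `Fin N`, and
colour a `k`-set `S` of positions by the map sending a labelling `φ : Fin k → Fin ℓ` to whether
placing the `i`-th element of `S` into fiber `φ i` yields an edge. Ramsey's theorem gives `ℓ * m`
positions on which this colour is constant; split them into `ℓ` consecutive blocks of size `m`
and take block `j` from fiber `j`. Each `k`-subset of the resulting `W` is then obtained from a
monotone labelling, which is determined by its fiber counts.
-/

open Finset

universe u

def IsRamseyBound (C : Type*) (k t N : ℕ) : Prop :=
  ∀ ⦃α : Type u⦄ [LinearOrder α] (S : Finset α) (χ : Finset α → C), N ≤ #S →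
    ∃ H ⊆ S, t ≤ #H ∧ ∃ c, ∀ e ⊆ H, #e = k → χ e = c

section Ramsey

variable {C : Type*}

theorem exists_prehomogeneous {k : ℕ} (hk : ∀ t, ∃ N, IsRamseyBound.{u} C k t N) (s : ℕ) :
    ∃ N, ∀ ⦃α : Type u⦄ [LinearOrder α] (S : Finset α) (χ : Finset α → C), N ≤ #S →
      ∃ P ⊆ S, s ≤ #P ∧ ∃ g : α → C,
        ∀ e ⊆ P, ∀ he : e.Nonempty, #e = k + 1 → χ e = g (e.min' he) := by
  induction s with
  | zero =>
    refine ⟨0, fun α _ S χ _ => ⟨∅, empty_subset S, le_rfl, fun _ => χ ∅, ?_⟩⟩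
    intro e he hne
    exact absurd (subset_empty.1 he) hne.ne_empty
  | succ s ih =>
    obtain ⟨N₀, hN₀⟩ := ih
    obtain ⟨N₁, hN₁⟩ := hk N₀
    refine ⟨N₁ + 1, fun α _ S χ hS => ?_⟩
    have hSne : S.Nonempty := card_pos.1 (by omega)
    set a := S.min' hSne
    have haS : a ∈ S := min'_mem S hSne
    obtain ⟨H, hHS, hH, c, hc⟩ := hN₁ (S.erase a) (fun T => χ (insert a T))
      (by rw [card_erase_of_mem haS]; omega)
    obtain ⟨P, hPH, hP, g, hg⟩ := hN₀ H χ hH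
    have haP : a ∉ P := fun ha => notMem_erase a S (hHS (hPH ha))
    have hPS : insert a P ⊆ S := insert_subset haS (hPH.trans (hHS.trans (erase_subset a S)))
    refine ⟨insert a P, hPS, by rw [card_insert_of_notMem haP]; omega,
      Function.update g a c, fun e heP hne hek => ?_⟩
    by_cases hae : a ∈ e
    · -- `a` is the least element of `S`, so it is the least element of every `e ∋ a`
      have hmin : e.min' hne = a :=
        le_antisymm (min'_le e a hae) (S.min'_le _ (hPS (heP (min'_mem e hne))))
      have hea : e.erase a ⊆ H := fun b hb => by
        obtain ⟨hba, hbe⟩ := mem_erase.1 hb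
        exact hPH ((mem_insert.1 (heP hbe)).resolve_left hba)
      have := hc (e.erase a) hea (by rw [card_erase_of_mem hae, hek]; rfl)
      rw [hmin, Function.update_self]
      rwa [insert_erase hae] at this
    · have hmin : e.min' hne ≠ a := fun h => hae (h ▸ min'_mem e hne)
      rw [Function.update_of_ne hmin]
      exact hg e (fun b hb => (mem_insert.1 (heP hb)).resolve_left (by rintro rfl; exact hae hb))
        hne hek

variable (C) in
theorem exists_isRamseyBound [Fintype C] (k t : ℕ) : ∃ N, IsRamseyBound.{u} C k t N := by
  classical
  induction k generalizing t with
  | zero =>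
    exact ⟨t, fun α _ S χ hS =>
      ⟨S, subset_rfl, hS, χ ∅, fun e _ he => by rw [card_eq_zero.1 he]⟩⟩
  | succ k ih =>
    obtain ⟨N, hN⟩ := exists_prehomogeneous ih (Fintype.card C * t + 1)
    refine ⟨N, fun α _ S χ hS => ?_⟩
    obtain ⟨P, hPS, hP, g, hg⟩ := hN S χ hS
    obtain ⟨c, -, hc⟩ := exists_lt_card_fiber_of_mul_lt_card_of_maps_to
      (s := P) (t := univ) (n := t) (fun a _ => mem_univ (g a)) (by rw [card_univ]; omega)
    refine ⟨{a ∈ P | g a = c}, (filter_subset _ _).trans hPS, hc.le, c, fun e he hek => ?_⟩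
    have hne : e.Nonempty := card_pos.1 (by omega)
    rw [hg e (he.trans (filter_subset _ _)) hne hek]
    exact (mem_filter.1 (he (min'_mem e hne))).2

end Ramsey

theorem Monotone.eq_of_card_fiber_eq {α : Type*} [PartialOrder α] [DecidableEq α] {k : ℕ}
    {φ ψ : Fin k → α} (hφ : Monotone φ) (hψ : Monotone ψ)
    (h : ∀ a, #{i | φ i = a} = #{i | ψ i = a}) : φ = ψ := by
  have hperm : (univ.val.map φ) = univ.val.map ψ := Multiset.ext.2 fun a => by
    rw [Multiset.count_map, Multiset.count_map]
    simp only [eq_comm (a := a)]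
    exact h a
  rw [Fin.univ_val_map, Fin.univ_val_map, Multiset.coe_eq_coe] at hperm
  exact List.ofFn_injective (hperm.eq_of_sortedLE hφ.sortedLE_ofFn hψ.sortedLE_ofFn)

theorem exists_orderEmbedding_forall_mem {α β : Type*} [LinearOrder α] [Fintype α]
    [LinearOrder β] {H : Finset β} (h : Fintype.card α ≤ #H) : ∃ g : α ↪o β, ∀ a, g a ∈ H := by
  obtain ⟨A, hAH, hA⟩ := exists_subset_card_eq h
  exact ⟨(Fintype.orderIsoFinOfCardEq α rfl).symm.toOrderEmbedding.trans (A.orderEmbOfFin hA),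
    fun a => hAH (A.orderEmbOfFin_mem hA _)⟩

theorem Finset.orderEmbOfFin_map {α β : Type*} [LinearOrder α] [LinearOrder β] (g : α ↪o β)
    {P : Finset α} {k : ℕ} (h : #P = k) (h' : #(P.map g.toEmbedding) = k) :
    (P.map g.toEmbedding).orderEmbOfFin h' = (P.orderEmbOfFin h).trans g :=
  (orderEmbOfFin_unique' h' fun i => mem_map_of_mem _ (P.orderEmbOfFin_mem h i)).symm

theorem exists_injective_fiberwise {V ι : Type*} [Fintype V] [DecidableEq ι] (β : Type*)
    [Fintype β] (f : V → ι) (h : ∀ j, Fintype.card β ≤ #{v | f v = j}) :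
    ∃ z : ι × β → V, Function.Injective z ∧ ∀ p, f (z p) = p.1 := by
  have emb : ∀ j, β ↪ {v // f v = j} := fun j =>
    (Function.Embedding.nonempty_of_card_le (by rw [Fintype.card_subtype]; exact h j)).some
  refine ⟨fun p => emb p.1 p.2, fun ⟨j, b⟩ ⟨j', b'⟩ hpq => ?_, fun p => (emb p.1 p.2).2⟩
  obtain rfl : j = j' := by
    rw [← (emb j b).2, ← (emb j' b').2]; exact congrArg f hpq
  exact Prod.ext rfl ((emb j).injective (Subtype.ext hpq))

section PartiteRamsey

variable {V ι β γ : Type*} [LinearOrder β]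

/-- Whether placing the `i`-th smallest element of `S` into the fiber `φ i` (through `z`) yields
an edge. -/
def edgePattern [DecidableEq V] (E : Finset V → Prop) (z : ι × β → V) (k : ℕ) (S : Finset β)
    (φ : Fin k → ι) : Prop :=
  ∃ h : #S = k, E (univ.image fun i => z (φ i, S.orderEmbOfFin h i))

variable [LinearOrder ι] [LinearOrder γ] {z : ι × β → V}

/-- `(j, r)` goes to fiber `j` at position `g (j, r)`: as `g` is monotone for the lexicographic
order, the fibers use consecutive blocks of positions. -/
def blockVertex (z : ι × β → V) (g : ι ×ₗ γ ↪o β) (p : ι ×ₗ γ) : V := z ((ofLex p).1, g p)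

theorem blockVertex_injective (hz : Function.Injective z) (g : ι ×ₗ γ ↪o β) :
    Function.Injective (blockVertex z g) := fun _ _ h =>
  g.injective (Prod.ext_iff.1 (hz h)).2

variable [DecidableEq V] [Fintype ι] [Fintype γ] {f : V → ι}

theorem card_filter_image_blockVertex (hz : Function.Injective z) (hfz : ∀ p, f (z p) = p.1)
    (g : ι ×ₗ γ ↪o β) (j : ι) :
    #{v ∈ univ.image (blockVertex z g) | f v = j} = Fintype.card γ := by
  rw [filter_image, card_image_of_injective _ (blockVertex_injective hz g)]
  simp only [blockVertex, hfz]
  change #{p : ι × γ | p.1 = j} = Fintype.card γ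
  rw [← univ_product_univ, filter_product_left (· = j)]
  simp [filter_eq']

theorem exists_edgePattern_of_subset_image_blockVertex (E : Finset V → Prop)
    (hz : Function.Injective z) (hfz : ∀ p, f (z p) = p.1) (g : ι ×ₗ γ ↪o β) {e : Finset V}
    (he : e ⊆ univ.image (blockVertex z g)) {k : ℕ} (hek : #e = k) :
    ∃ S ⊆ univ.map g.toEmbedding, #S = k ∧ ∃ φ : Fin k → ι, Monotone φ ∧
      (∀ j, #{i | φ i = j} = #{v ∈ e | f v = j}) ∧ (E e ↔ edgePattern E z k S φ) := by
  obtain ⟨P, -, rfl⟩ := subset_image_iff.1 he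
  have hP : #P = k := by rw [← hek, card_image_of_injective _ (blockVertex_injective hz g)]
  have hS : #(P.map g.toEmbedding) = k := by rw [card_map, hP]
  set s := P.orderEmbOfFin hP
  have hPs : P.image (blockVertex z g) = univ.image (blockVertex z g ∘ s) := by
    rw [← image_image, image_orderEmbOfFin_univ]
  have hSs : (fun i => z ((ofLex (s i)).1, (P.map g.toEmbedding).orderEmbOfFin hS i)) =
      blockVertex z g ∘ s := by
    rw [orderEmbOfFin_map g hP hS]; rfl
  refine ⟨P.map g.toEmbedding, map_subset_map.2 (subset_univ P), hS, fun i => (ofLex (s i)).1,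
    fun i j hij => Prod.Lex.monotone_fst _ _ (s.monotone hij), fun j => ?_, ?_⟩
  · rw [hPs, filter_image,
      card_image_of_injective _ ((blockVertex_injective hz g).comp s.injective)]
    simp only [Function.comp, blockVertex, hfz]
  · exact ⟨fun h => ⟨hS, by rwa [hSs, ← hPs]⟩, fun ⟨_, h⟩ => by rwa [hSs, ← hPs] at h⟩

theorem edge_iff_of_card_filter_eq {E : Finset V → Prop} (hz : Function.Injective z)
    (hfz : ∀ p, f (z p) = p.1) (g : ι ×ₗ γ ↪o β) {k : ℕ} {c : (Fin k → ι) → Prop}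
    (hc : ∀ S ⊆ univ.map g.toEmbedding, #S = k → edgePattern E z k S = c) {e e' : Finset V}
    (he : e ⊆ univ.image (blockVertex z g)) (he' : e' ⊆ univ.image (blockVertex z g))
    (hek : #e = k) (hek' : #e' = k) (hee' : ∀ j, #{v ∈ e | f v = j} = #{v ∈ e' | f v = j}) :
    E e ↔ E e' := by
  obtain ⟨S, hS, hSk, φ, hφ, hφe, hEφ⟩ :=
    exists_edgePattern_of_subset_image_blockVertex E hz hfz g he hek
  obtain ⟨S', hS', hSk', φ', hφ', hφe', hEφ'⟩ :=
    exists_edgePattern_of_subset_image_blockVertex E hz hfz g he' hek'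
  have : φ = φ' := hφ.eq_of_card_fiber_eq hφ' fun j => by rw [hφe, hφe', hee']
  rw [hEφ, hEφ', hc S hS hSk, hc S' hS' hSk', this]

end PartiteRamsey

theorem stmt2_general (ℓ : ℕ) (m : ℕ) (k : ℕ) :
    ∃ n : ℕ, ∀ (V : Type) [Fintype V] [DecidableEq V]
      (E : Finset V → Prop) (f : V → Fin ℓ),
      (∀ i : Fin ℓ, n ≤ (Finset.univ.filter fun v => f v = i).card) →
      ∃ (Q : Set (Fin ℓ → ℕ)) (W : Finset V),
        (∀ q ∈ Q, ∑ j, q j = k) ∧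
        (∀ i : Fin ℓ, m ≤ (W.filter fun v => f v = i).card) ∧
        (∀ e : Finset V, e ⊆ W → e.card = k →
          (E e ↔ (fun j => (e.filter fun v => f v = j).card) ∈ Q)) := by
  classical
  obtain ⟨N, hN⟩ := exists_isRamseyBound.{0} ((Fin k → Fin ℓ) → Prop) k (ℓ * m)
  refine ⟨N, fun V _ _ E f hfib => ?_⟩
  obtain ⟨z, hz, hfz⟩ := exists_injective_fiberwise (Fin N) f (by simpa using hfib)
  obtain ⟨H, -, hH, c, hc⟩ := hN (univ : Finset (Fin N)) (edgePattern E z k) (by simp)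
  obtain ⟨g, hgH⟩ := exists_orderEmbedding_forall_mem (α := Fin ℓ ×ₗ Fin m) (by simpa using hH)
  have hc' : ∀ S ⊆ univ.map g.toEmbedding, #S = k → edgePattern E z k S = c := fun S hS =>
    hc S fun b hb => by obtain ⟨p, -, rfl⟩ := mem_map.1 (hS hb); exact hgH p
  set W := univ.image (blockVertex z g)
  refine ⟨(fun e j => #{v ∈ e | f v = j}) '' {e | e ⊆ W ∧ #e = k ∧ E e}, W, ?_, fun j => ?_,
    fun e he hek => ⟨fun hE => ⟨e, ⟨he, hek, hE⟩, rfl⟩, ?_⟩⟩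
  · rintro q ⟨e, ⟨-, rfl, -⟩, rfl⟩
    exact (card_eq_sum_card_fiberwise fun v _ => mem_univ (f v)).symm
  · rw [card_filter_image_blockVertex hz hfz g j, Fintype.card_fin]
  · rintro ⟨e', ⟨he', hek', hE'⟩, hee'⟩
    exact (edge_iff_of_card_filter_eq hz hfz g hc' he' he hek' hek (congrFun hee')).1 hE'

/-- Partite Ramsey theorem for `k`-uniform hypergraphs: for every `ℓ ∈ ℕ₊`, `m ∈ ℕ`, `k ∈ ℕ₊`
there is `n` such that for every `k`-uniform hypergraph `H` (given by its edge predicate `E` on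
`k`-element finsets of the vertex type `V`) and every `f : V → Fin ℓ` all of whose fibers have
size at least `n`, there is a set `Q` of weak compositions of `k` of length `ℓ` and a subset
`W ⊆ V` with all fibers of `f` restricted to `W` of size at least `m`, such that a `k`-subset of
`W` is an edge iff its trace sizes on the fibers of `f` form a composition in `Q`. -/
theorem stmt2 (ℓ : ℕ) (hℓ : 0 < ℓ) (m : ℕ) (k : ℕ) (hk : 0 < k) :
    ∃ n : ℕ, ∀ (V : Type) [Fintype V] [DecidableEq V]
      (E : Finset V → Prop) (f : V → Fin ℓ),
      (∀ i : Fin ℓ, n ≤ (Finset.univ.filter fun v => f v = i).card) →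
      ∃ (Q : Set (Fin ℓ → ℕ)) (W : Finset V),
        (∀ q ∈ Q, ∑ j, q j = k) ∧
        (∀ i : Fin ℓ, m ≤ (W.filter fun v => f v = i).card) ∧
        (∀ e : Finset V, e ⊆ W → e.card = k →
          (E e ↔ (fun j => (e.filter fun v => f v = j).card) ∈ Q)) :=
  stmt2_general ℓ m k
end

section
/- For every ℓ ∈ ℕ₊, m ∈ ℕ and t ∈ ℕ₊ and every tuple (k₁,…,k_t) ∈ ℕ₊ᵗ, the (ℓ,(k₁,…,k_t),m)-Ramsey number is finite: there exists n such that for every structure H consisting of t uniform hypergraphs (the i-th of arity k_i) on a common vertex set, and every f : V(H) → [ℓ] with all fibers of size at least n, there exist sets Q_i of weak compositions of k_i of length ℓ (for each i ∈ [t]) and W ⊆ V(H) with all fibers of f|_W of size at least m, such that for each i and each k_i-element subset e ⊆ W, e is an E_i-edge of H iff (|e ∩ f⁻¹(j)|)_j ∈ Q_i. -/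
/-!
Ramsey's theorem for `K`-uniform hypergraphs is proved by induction on `K` through
end-homogeneous sets. Induction on the number of parts then gives a product version: colour
each `κ₀`-subset `e₀` of `S₀` by the whole function `g ↦ χ (e₀, g)` on tuples drawn from fixed
copies of `Fin n` inside the other parts; this is a finite set of colours, so Ramsey's theorem
makes it constant on a large `W₀ ⊆ S₀`, and the remaining parts are handled by induction.

For the theorem, colour a tuple of subsets of the fibres of `f` by the set of `i` for which its
union is an `E i`-edge, and apply the product version successively to every profile with entries
at most `∑ i, k i`. On the union `U` of the resulting sets, whether a `k i`-subset is an `E i`-edge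
then depends only on its profile, so `Q i` can be taken to be the set of profiles of edges.
-/

open Finset Fintype

universe u

section Ramsey

variable {α : Type u} {γ : Type*}

def IsEndHomogeneous [LinearOrder α] (χ : Finset α → γ) (K : ℕ) (P : Finset α) : Prop :=
  ∃ c : α → γ, ∀ x ∈ P, ∀ e ∈ powersetCard K {y ∈ P | x < y}, χ (insert x e) = c x

theorem exists_isEndHomogeneous_subset {K : ℕ}
    (hK : ∀ m, ∃ n, ∀ {α : Type u} (S : Finset α) (χ : Finset α → γ), n ≤ #S →
      ∃ W ⊆ S, m ≤ #W ∧ ∃ c, ∀ e ∈ W.powersetCard K, χ e = c) (M : ℕ) :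
    ∃ n, ∀ {α : Type u} [LinearOrder α] (S : Finset α) (χ : Finset α → γ), n ≤ #S →
      ∃ P ⊆ S, M ≤ #P ∧ IsEndHomogeneous χ K P := by
  induction M with
  | zero => exact ⟨0, fun S χ _ => ⟨∅, empty_subset S, le_rfl, fun _ => χ ∅, by simp⟩⟩
  | succ M ih =>
    obtain ⟨n₁, h₁⟩ := ih
    obtain ⟨n₂, h₂⟩ := hK n₁
    refine ⟨n₂ + 1, fun S χ hS => ?_⟩
    have hne : S.Nonempty := card_pos.mp (by omega)
    set x := S.min' hne
    obtain ⟨T, hTS, hT, c₀, hc₀⟩ := h₂ (S.erase x) (fun e => χ (insert x e))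
      (by rw [card_erase_of_mem (S.min'_mem hne)]; omega)
    obtain ⟨P, hPT, hP, c, hc⟩ := h₁ T χ hT
    have hxP : ∀ y ∈ P, x < y := fun y hy =>
      have hy' := mem_erase.mp (hTS (hPT hy))
      lt_of_le_of_ne (S.min'_le y hy'.2) (Ne.symm hy'.1)
    refine ⟨insert x P, insert_subset (S.min'_mem hne) ((hPT.trans hTS).trans (erase_subset x S)),
      by rw [card_insert_of_notMem fun h => (hxP x h).false]; omega,
      Function.update c x c₀, ?_⟩
    rintro y hy e he
    obtain ⟨heP, rfl⟩ := mem_powersetCard.mp he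
    rcases mem_insert.mp hy with rfl | hy
    · have habove : {z ∈ insert x P | x < z} = P := by
        rw [filter_insert, if_neg (lt_irrefl x), filter_true_of_mem hxP]
      rw [habove] at heP
      simpa using hc₀ e (mem_powersetCard.mpr ⟨heP.trans hPT, rfl⟩)
    · have habove : {z ∈ insert x P | y < z} = {z ∈ P | y < z} := by
        rw [filter_insert, if_neg (lt_asymm (hxP y hy))]
      rw [habove] at heP
      rw [Function.update_of_ne (hxP y hy).ne']
      exact hc y hy e (mem_powersetCard.mpr ⟨heP, rfl⟩)

theorem IsEndHomogeneous.exists_homogeneous_subset [LinearOrder α] [Fintype γ]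
    {χ : Finset α → γ} {K m : ℕ} {P : Finset α} (hP : IsEndHomogeneous χ K P)
    (hcard : Fintype.card γ * m < #P) :
    ∃ W ⊆ P, m ≤ #W ∧ ∃ c, ∀ e ∈ W.powersetCard (K + 1), χ e = c := by
  classical
  obtain ⟨c, hc⟩ := hP
  obtain ⟨c₀, -, hc₀⟩ := exists_lt_card_fiber_of_mul_lt_card_of_maps_to
    (fun x _ => mem_univ (c x)) (by rwa [card_univ])
  refine ⟨{x ∈ P | c x = c₀}, filter_subset _ P, hc₀.le, c₀, fun e he => ?_⟩
  obtain ⟨heW, he⟩ := mem_powersetCard.mp he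
  have hne : e.Nonempty := card_pos.mp (by omega)
  set x := e.min' hne
  have hxW := mem_filter.mp (heW (e.min'_mem hne))
  have hrest : e.erase x ∈ powersetCard K {y ∈ P | x < y} := by
    refine mem_powersetCard.mpr ⟨fun y hy => ?_, by rw [card_erase_of_mem (e.min'_mem hne)]; omega⟩
    obtain ⟨hyx, hye⟩ := mem_erase.mp hy
    exact mem_filter.mpr
      ⟨(mem_filter.mp (heW hye)).1, lt_of_le_of_ne (e.min'_le y hye) (Ne.symm hyx)⟩
  rw [← insert_erase (e.min'_mem hne), hc x hxW.1 _ hrest, hxW.2]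

theorem exists_homogeneous_subset (γ : Type*) [Finite γ] (K m : ℕ) :
    ∃ n, ∀ {α : Type u} (S : Finset α) (χ : Finset α → γ), n ≤ #S →
      ∃ W ⊆ S, m ≤ #W ∧ ∃ c, ∀ e ∈ W.powersetCard K, χ e = c := by
  have := Fintype.ofFinite γ
  induction K generalizing m with
  | zero => exact ⟨m, fun S χ hS => ⟨S, subset_rfl, hS, χ ∅, by simp⟩⟩
  | succ K ih =>
    obtain ⟨n, hn⟩ := exists_isEndHomogeneous_subset ih (Fintype.card γ * m + 1)
    refine ⟨n, fun {α} S χ hS => ?_⟩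
    let : LinearOrder α := IsWellOrder.linearOrder WellOrderingRel
    obtain ⟨P, hPS, hP, hend⟩ := hn S χ hS
    obtain ⟨W, hWP, hW⟩ := hend.exists_homogeneous_subset (m := m) (by omega)
    exact ⟨W, hWP.trans hPS, hW⟩

end Ramsey

section Product

theorem exists_embedding_fin_of_le_card {α : Type*} {S : Finset α} {n : ℕ} (h : n ≤ #S) :
    ∃ ι : Fin n ↪ α, univ.map ι ⊆ S := by
  obtain ⟨ι⟩ := Function.Embedding.nonempty_of_card_le (α := Fin n) (β := S) (by simpa using h)
  refine ⟨ι.trans (Function.Embedding.subtype _), fun x hx => ?_⟩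
  obtain ⟨i, -, rfl⟩ := mem_map.mp hx
  exact (ι i).2

theorem exists_homogeneous_piFinset (γ : Type*) [Finite γ] (ℓ : ℕ) (κ : Fin ℓ → ℕ) (m : ℕ) :
    ∃ n, ∀ {α : Type u} (S : Fin ℓ → Finset α) (χ : (Fin ℓ → Finset α) → γ),
      (∀ j, n ≤ #(S j)) → ∃ W : Fin ℓ → Finset α, (∀ j, W j ⊆ S j) ∧ (∀ j, m ≤ #(W j)) ∧
        ∃ c, ∀ e ∈ piFinset fun j => (W j).powersetCard (κ j), χ e = c := by
  induction ℓ generalizing m with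
  | zero =>
    exact ⟨m, fun S χ hS => ⟨S, fun _ => subset_rfl, hS, χ finZeroElim, fun e _ => by
      rw [Subsingleton.elim e finZeroElim]⟩⟩
  | succ ℓ ih =>
    obtain ⟨n₁, h₁⟩ := ih (Fin.tail κ) m
    obtain ⟨n₀, h₀⟩ :=
      exists_homogeneous_subset ((Fin ℓ → Finset (Fin n₁)) → γ) (κ 0) (max m (κ 0))
    refine ⟨max n₀ n₁, fun {α} S χ hS => ?_⟩
    choose ι hι using fun j : Fin ℓ =>
      exists_embedding_fin_of_le_card ((le_max_right _ _).trans (hS j.succ))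
    obtain ⟨W₀, hW₀S, hW₀, c₀, hc₀⟩ := h₀ (S 0)
      (fun e₀ g => χ (Fin.cons e₀ fun j => (g j).map (ι j))) ((le_max_left _ _).trans (hS 0))
    obtain ⟨e₀, he₀⟩ := powersetCard_nonempty.mpr ((le_max_right _ _).trans hW₀)
    obtain ⟨W', hW'S, hW', c, hc⟩ :=
      h₁ (fun j => univ.map (ι j)) (fun e => χ (Fin.cons e₀ e)) (fun j => by simp)
    refine ⟨Fin.cons W₀ W', Fin.cases hW₀S fun j => (hW'S j).trans (hι j),
      Fin.cases ((le_max_left _ _).trans hW₀) hW', c, fun e he => ?_⟩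
    rw [mem_piFinset] at he
    have htail : ∀ j, ∃ g ⊆ univ, e j.succ = g.map (ι j) := fun j =>
      subset_map_iff.mp ((mem_powersetCard.mp (he j.succ)).1.trans (by simpa using hW'S j))
    choose g _ hg using htail
    calc χ e = χ (Fin.cons (e 0) fun j => (g j).map (ι j)) := by
          rw [← funext hg]; exact congrArg χ (Fin.cons_self_tail e).symm
      _ = χ (Fin.cons e₀ fun j => (g j).map (ι j)) := by
          rw [congrFun (hc₀ (e 0) (by simpa using he 0)) g, congrFun (hc₀ e₀ he₀) g]
      _ = c := by
          rw [← funext hg]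
          exact hc _ (mem_piFinset.mpr fun j => by simpa [Fin.tail] using he j.succ)

theorem exists_homogeneous_piFinset_of_mem (γ : Type*) [Finite γ] (ℓ : ℕ)
    (D : Finset (Fin ℓ → ℕ)) (m : ℕ) :
    ∃ n, ∀ {α : Type u} (S : Fin ℓ → Finset α) (χ : (Fin ℓ → Finset α) → γ),
      (∀ j, n ≤ #(S j)) → ∃ W : Fin ℓ → Finset α, (∀ j, W j ⊆ S j) ∧ (∀ j, m ≤ #(W j)) ∧
        ∀ κ ∈ D, ∃ c, ∀ e ∈ piFinset fun j => (W j).powersetCard (κ j), χ e = c := by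
  classical
  induction D using Finset.induction_on with
  | empty => exact ⟨m, fun S _ hS => ⟨S, fun _ => subset_rfl, hS, by simp⟩⟩
  | insert κ D _ ih =>
    obtain ⟨n₁, h₁⟩ := ih
    obtain ⟨n, hn⟩ := exists_homogeneous_piFinset γ ℓ κ n₁
    refine ⟨n, fun S χ hS => ?_⟩
    obtain ⟨W₁, hW₁S, hW₁, c, hc⟩ := hn S χ hS
    obtain ⟨W, hWW₁, hW, hD⟩ := h₁ W₁ χ hW₁
    refine ⟨W, fun j => (hWW₁ j).trans (hW₁S j), hW, fun κ' hκ' => ?_⟩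
    rcases mem_insert.mp hκ' with rfl | hκ'
    · exact ⟨c, fun e he => hc e (piFinset_subset _ _ (fun j => powersetCard_mono (hWW₁ j)) he)⟩
    · exact hD κ' hκ'

end Product

theorem filter_mem_piFinset_powersetCard {ι V : Type*} [Fintype ι] [DecidableEq ι]
    [DecidableEq V] {f : V → ι} {W : ι → Finset V} (hW : ∀ j, ∀ v ∈ W j, f v = j)
    {e : Finset V} (he : e ⊆ univ.biUnion W) {κ : ι → ℕ} (hκ : ∀ j, #{v ∈ e | f v = j} = κ j) :
    (fun j => {v ∈ e | f v = j}) ∈ piFinset fun j => (W j).powersetCard (κ j) := by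
  refine mem_piFinset.mpr fun j => mem_powersetCard.mpr ⟨fun v hv => ?_, hκ j⟩
  obtain ⟨hve, rfl⟩ := mem_filter.mp hv
  obtain ⟨j, -, hvj⟩ := mem_biUnion.mp (he hve)
  rwa [hW j v hvj]

theorem stmt4_general (ℓ : ℕ) (m : ℕ) (t : ℕ)
    (k : Fin t → ℕ) :
    ∃ n : ℕ, ∀ (V : Type) [Fintype V] [DecidableEq V]
      (E : Fin t → Finset V → Prop) (f : V → Fin ℓ),
      (∀ j : Fin ℓ, n ≤ (Finset.univ.filter fun v => f v = j).card) →
      ∃ (Q : Fin t → Set (Fin ℓ → ℕ)) (W : Finset V),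
        (∀ i, ∀ q ∈ Q i, ∑ j, q j = k i) ∧
        (∀ j : Fin ℓ, m ≤ (W.filter fun v => f v = j).card) ∧
        (∀ i, ∀ e : Finset V, e ⊆ W → e.card = k i →
          (E i e ↔ (fun j => (e.filter fun v => f v = j).card) ∈ Q i)) := by
  classical
  obtain ⟨n, hn⟩ := exists_homogeneous_piFinset_of_mem (Fin t → Prop) ℓ
    (piFinset fun _ => range (∑ i, k i + 1)) m
  refine ⟨n, fun V _ _ E f hfib => ?_⟩
  obtain ⟨W, hWf, hW, hconst⟩ := hn _ (fun e i => E i (univ.biUnion e)) hfib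
  have hWf' : ∀ j, ∀ v ∈ W j, f v = j := fun j v hv => (mem_filter.mp (hWf j hv)).2
  refine ⟨fun i => {q | ∃ e ⊆ univ.biUnion W, #e = k i ∧ (fun j => #{v ∈ e | f v = j}) = q ∧ E i e},
    univ.biUnion W, ?_, fun j => (hW j).trans (card_le_card fun v hv => ?_),
    fun i e he hek => ⟨fun hE => ⟨e, he, hek, rfl, hE⟩, ?_⟩⟩
  · rintro i _ ⟨e, -, hek, rfl, -⟩
    rw [← hek]
    exact (card_eq_sum_card_fiberwise fun v _ => mem_univ (f v)).symm
  · exact mem_filter.mpr ⟨mem_biUnion.mpr ⟨j, mem_univ j, hv⟩, hWf' j v hv⟩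
  · rintro ⟨e', he', -, hprofile, hE'⟩
    have hshape : (fun j => #{v ∈ e | f v = j}) ∈ piFinset fun _ => range (∑ i, k i + 1) :=
      mem_piFinset.mpr fun j => mem_range.mpr (Nat.lt_succ_of_le ((card_filter_le e _).trans
        (hek ▸ single_le_sum (fun _ _ => Nat.zero_le _) (mem_univ i))))
    obtain ⟨c, hc⟩ := hconst _ hshape
    have hsame := (congrFun (hc _ (filter_mem_piFinset_powersetCard hWf' he fun _ => rfl)) i).trans
      (congrFun (hc _ (filter_mem_piFinset_powersetCard hWf' he' (congrFun hprofile))) i).symm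
    simp only [biUnion_filter_eq_of_maps_to fun v _ => mem_univ (f v)] at hsame
    exact hsame ▸ hE'

/-- Partite Ramsey theorem for `(k₁,…,k_t)`-hypergraphs: for every `ℓ ∈ ℕ₊`, `m ∈ ℕ`, `t ∈ ℕ₊`
and arities `k : Fin t → ℕ₊`, there is `n` such that for every structure consisting of `t`
uniform hypergraphs `E i` (of arity `k i`) on a common vertex set `V` and every `f : V → Fin ℓ`
with all fibers of size at least `n`, there are sets `Q i` of weak compositions of `k i` of
length `ℓ` and a subset `W` with all fibers of `f|_W` of size at least `m`, such that for each
`i`, a `(k i)`-subset of `W` is an `E i`-edge iff its fiber trace sizes lie in `Q i`. -/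
theorem stmt4 (ℓ : ℕ) (hℓ : 0 < ℓ) (m : ℕ) (t : ℕ) (ht : 0 < t)
    (k : Fin t → ℕ) (hk : ∀ i, 0 < k i) :
    ∃ n : ℕ, ∀ (V : Type) [Fintype V] [DecidableEq V]
      (E : Fin t → Finset V → Prop) (f : V → Fin ℓ),
      (∀ j : Fin ℓ, n ≤ (Finset.univ.filter fun v => f v = j).card) →
      ∃ (Q : Fin t → Set (Fin ℓ → ℕ)) (W : Finset V),
        (∀ i, ∀ q ∈ Q i, ∑ j, q j = k i) ∧
        (∀ j : Fin ℓ, m ≤ (W.filter fun v => f v = j).card) ∧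
        (∀ i, ∀ e : Finset V, e ⊆ W → e.card = k i →
          (E i e ↔ (fun j => (e.filter fun v => f v = j).card) ∈ Q i)) :=
  stmt4_general ℓ m t k
end

section
/- Let F be a family of graphs, and let Forb⁺(F) be the class of all graphs containing no non-induced copy of any member of F (this class is closed under induced subgraphs). Then: for every ℓ ∈ ℕ₊, (for all n there exists a graph G ∈ Forb⁺(F) on n vertices containing a non-induced copy of T_{n,ℓ}) if and only if ℓ < χ(F), where χ(F) := inf{χ(F') : F' ∈ F} (with inf ∅ = ∞). Consequently, the abstract chromatic number of the axiom-adding interpretation for Forb⁺(F) equals max{χ(F), 1}. -/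
/-- The `n`-vertex members of `Forb⁺(F)`: graphs with no non-induced copy of any member of the
family `F` of finite graphs. -/
def Forb (F : Set ((m : ℕ) × SimpleGraph (Fin m))) (n : ℕ) : Set (SimpleGraph (Fin n)) :=
  {G | ∀ p ∈ F, ¬ HasCopy p.2 G}


lemma hasCopy_trans {α β γ : Type*} {G : SimpleGraph α} {H : SimpleGraph β} {K : SimpleGraph γ}
    (h1 : HasCopy G H) (h2 : HasCopy H K) : HasCopy G K := by
  obtain ⟨f, hf⟩ := h1; obtain ⟨g, hg⟩ := h2
  exact ⟨f.trans g, fun a b hab => hg _ _ (hf _ _ hab)⟩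

lemma colorable_of_hasCopy {α β : Type*} {G : SimpleGraph α} {H : SimpleGraph β} {k : ℕ}
    (h : HasCopy G H) (hc : H.Colorable k) : G.Colorable k := by
  obtain ⟨f, hf⟩ := h
  obtain ⟨c⟩ := hc
  exact ⟨SimpleGraph.Coloring.mk (fun v => c (f v)) (fun hab => c.valid (hf _ _ hab))⟩

lemma turan_colorable {n ℓ : ℕ} (hℓ : 0 < ℓ) : (SimpleGraph.turanGraph n ℓ).Colorable ℓ := by
  refine ⟨SimpleGraph.Coloring.mk (fun v => ⟨(v : ℕ) % ℓ, Nat.mod_lt _ hℓ⟩) ?_⟩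
  intro a b hab
  simp only [SimpleGraph.turanGraph] at hab
  simpa [Fin.ext_iff] using hab

lemma hasCopy_turan {m ℓ : ℕ} (hℓ : 0 < ℓ) {H : SimpleGraph (Fin m)} (hc : H.Colorable ℓ) :
    HasCopy H (SimpleGraph.turanGraph (ℓ * m) ℓ) := by
  obtain ⟨c⟩ := hc
  have hb : ∀ v : Fin m, (c v : ℕ) + ℓ * (v : ℕ) < ℓ * m := by
    intro v
    calc (c v : ℕ) + ℓ * (v : ℕ) < ℓ * ((v : ℕ) + 1) := by
          have h := (c v).isLt; rw [Nat.mul_add, Nat.mul_one]; omega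
      _ ≤ ℓ * m := Nat.mul_le_mul_left _ v.isLt
  refine ⟨⟨fun v => ⟨(c v : ℕ) + ℓ * (v : ℕ), hb v⟩, ?_⟩, ?_⟩
  · intro v w hvw
    simp only [Fin.mk.injEq] at hvw
    have h1 : ((c v : ℕ) + ℓ * (v : ℕ)) % ℓ = (c v : ℕ) := by
      simp [Nat.add_mul_mod_self_left, Nat.mod_eq_of_lt (c v).isLt]
    have h2 : ((c w : ℕ) + ℓ * (w : ℕ)) % ℓ = (c w : ℕ) := by
      simp [Nat.add_mul_mod_self_left, Nat.mod_eq_of_lt (c w).isLt]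
    have : (c v : ℕ) = (c w : ℕ) := by rw [← h1, ← h2, hvw]
    have : (v : ℕ) = (w : ℕ) := by
      have := Nat.eq_of_mul_eq_mul_left hℓ (by omega : ℓ * (v:ℕ) = ℓ * (w:ℕ))
      exact this
    exact Fin.ext this
  · intro a b hab
    have hcne : c a ≠ c b := c.valid hab
    show ¬ ((c a : ℕ) + ℓ * (a : ℕ)) % ℓ = ((c b : ℕ) + ℓ * (b : ℕ)) % ℓ
    rw [Nat.add_mul_mod_self_left, Nat.add_mul_mod_self_left,
      Nat.mod_eq_of_lt (c a).isLt, Nat.mod_eq_of_lt (c b).isLt]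
    exact fun h => hcne (Fin.ext h)

lemma key (F : Set ((m : ℕ) × SimpleGraph (Fin m))) (ℓ : ℕ) (hℓ : 0 < ℓ) :
    (∀ n : ℕ, ∃ G ∈ Forb F n, HasCopy (SimpleGraph.turanGraph n ℓ) G) ↔
      (ℓ : ℕ∞) < ⨅ p ∈ F, p.2.chromaticNumber := by
  constructor
  · intro h
    have haux : ∀ p ∈ F, (ℓ : ℕ∞) < p.2.chromaticNumber := by
      intro p hp
      by_contra hc
      have hcol : p.2.Colorable ℓ :=
        SimpleGraph.chromaticNumber_le_iff_colorable.mp (not_lt.mp hc)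
      obtain ⟨G, hG, hT⟩ := h (ℓ * p.1)
      exact hG p hp (hasCopy_trans (hasCopy_turan hℓ hcol) hT)
    have hle : (ℓ : ℕ∞) + 1 ≤ ⨅ p ∈ F, p.2.chromaticNumber :=
      le_iInf₂ fun p hp => (ENat.add_one_le_iff (by simp)).mpr (haux p hp)
    have hstep : (ℓ : ℕ∞) < (ℓ : ℕ∞) + 1 := by exact_mod_cast Nat.lt_succ_self ℓ
    exact lt_of_lt_of_le hstep hle
  · intro h n
    refine ⟨SimpleGraph.turanGraph n ℓ, ?_, ⟨Function.Embedding.refl _, fun a b hab => hab⟩⟩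
    intro p hp hcopy
    have hcol : p.2.Colorable ℓ := colorable_of_hasCopy hcopy (turan_colorable hℓ)
    have h1 : p.2.chromaticNumber ≤ (ℓ : ℕ∞) :=
      SimpleGraph.chromaticNumber_le_iff_colorable.mpr hcol
    exact (h.trans_le (iInf₂_le p hp)).not_ge h1

/-- For a family `F` of graphs: for each `ℓ ∈ ℕ₊`, every size `n` admits a graph in `Forb⁺(F)`
containing a non-induced copy of the Turán graph `T_{n,ℓ}` iff `ℓ < χ(F) := inf_{F' ∈ F} χ(F')`;
consequently, the abstract chromatic number of the corresponding axiom-adding interpretation is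
`max {χ(F), 1}`. -/
theorem stmt12 (F : Set ((m : ℕ) × SimpleGraph (Fin m))) :
    (∀ ℓ : ℕ, 0 < ℓ →
      ((∀ n : ℕ, ∃ G ∈ Forb F n, HasCopy (SimpleGraph.turanGraph n ℓ) G) ↔
        (ℓ : ℕ∞) < ⨅ p ∈ F, p.2.chromaticNumber)) ∧
    sSup (insert (0 : ℕ∞) ((fun ℓ : ℕ => (ℓ : ℕ∞)) ''
        {ℓ : ℕ | 0 < ℓ ∧ ∀ n : ℕ, ∃ G ∈ Forb F n,
          HasCopy (SimpleGraph.turanGraph n ℓ) G})) + 1 =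
      max (⨅ p ∈ F, p.2.chromaticNumber) 1 := by
  refine ⟨fun ℓ hℓ => key F ℓ hℓ, ?_⟩
  set χ : ℕ∞ := ⨅ p ∈ F, p.2.chromaticNumber with hχ
  have hset : {ℓ : ℕ | 0 < ℓ ∧ ∀ n : ℕ, ∃ G ∈ Forb F n,
      HasCopy (SimpleGraph.turanGraph n ℓ) G} = {ℓ : ℕ | 0 < ℓ ∧ (ℓ : ℕ∞) < χ} := by
    ext ℓ
    simp only [Set.mem_setOf_eq]
    exact and_congr_right fun hℓ => key F ℓ hℓ
  rw [hset]
  rcases le_or_gt χ 1 with h1 | h1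
  · have hS : {ℓ : ℕ | 0 < ℓ ∧ (ℓ : ℕ∞) < χ} = ∅ := by
      ext ℓ
      simp only [Set.mem_setOf_eq, Set.mem_empty_iff_false, iff_false, not_and, not_lt]
      intro hℓ
      exact h1.trans (by exact_mod_cast hℓ)
    rw [hS, Set.image_empty, insert_empty_eq, csSup_singleton, zero_add,
      max_eq_right h1]
  · rw [max_eq_left h1.le]
    rcases eq_or_ne χ ⊤ with htop | htop
    · have : sSup (insert (0 : ℕ∞) ((fun ℓ : ℕ => (ℓ : ℕ∞)) ''
          {ℓ : ℕ | 0 < ℓ ∧ (ℓ : ℕ∞) < χ})) = ⊤ := by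
        rw [sSup_eq_top]
        intro b hb
        lift b to ℕ using hb.ne
        refine ⟨((b + 1 : ℕ) : ℕ∞), Set.mem_insert_of_mem _ ⟨b + 1, ⟨Nat.succ_pos b, ?_⟩, rfl⟩, ?_⟩
        · rw [htop]; exact WithTop.coe_lt_top _
        · exact_mod_cast Nat.lt_succ_self b
      rw [this, htop]; rfl
    · lift χ to ℕ using htop with k hk
      have hk2 : 2 ≤ k := by exact_mod_cast (ENat.add_one_le_iff (by simp)).mpr h1
      have hsup : sSup (insert (0 : ℕ∞) ((fun ℓ : ℕ => (ℓ : ℕ∞)) ''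
          {ℓ : ℕ | 0 < ℓ ∧ (ℓ : ℕ∞) < (k : ℕ∞)})) = ((k - 1 : ℕ) : ℕ∞) := by
        apply le_antisymm
        · apply sSup_le
          rintro x (rfl | ⟨ℓ, ⟨hℓ, hlt⟩, rfl⟩)
          · exact zero_le
          · have : ℓ < k := by exact_mod_cast hlt
            show (ℓ : ℕ∞) ≤ ((k - 1 : ℕ) : ℕ∞)
            exact_mod_cast Nat.le_sub_one_of_lt this
        · apply le_sSup
          exact Set.mem_insert_of_mem _ ⟨k - 1, ⟨by omega, by exact_mod_cast (by omega : k - 1 < k)⟩, rfl⟩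
      rw [hsup]
      exact_mod_cast congrArg (Nat.cast : ℕ → ℕ∞) (by omega : k - 1 + 1 = k)
end

section
/- Let F be a family of graphs that contains a complete graph, and let Forb(F) be the class of graphs with no induced copy of a member of F. Then sup({ℓ ∈ ℕ₊ : ∀n ∃G ∈ Forb(F) on n vertices with T_{n,ℓ} ⊆ G} ∪ {0}) + 1 equals min{ℓ ∈ ℕ₊ : F contains a complete ℓ-partite graph}. Moreover, if F contains no complete graph, then for every ℓ and every n there is an F-induced-free graph on n vertices containing T_{n,ℓ} as a non-induced subgraph. -/
open Finset

def HasInducedCopy {α β : Type*} (G : SimpleGraph α) (H : SimpleGraph β) : Prop :=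
  ∃ f : α ↪ β, ∀ a b, G.Adj a b ↔ H.Adj (f a) (f b)

def IsCompleteMultipartite (ℓ : ℕ) {α : Type*} (G : SimpleGraph α) : Prop :=
  ∃ c : α → Fin ℓ, ∀ v w, G.Adj v w ↔ c v ≠ c w

def ForbInd (F : Set ((m : ℕ) × SimpleGraph (Fin m))) (n : ℕ) : Set (SimpleGraph (Fin n)) :=
  {G | ∀ p ∈ F, ¬ HasInducedCopy p.2 G}

lemma my_ramsey : ∀ k s t : ℕ, s + t ≤ k →
    ∃ r : ℕ, ∀ {V : Type} (G : SimpleGraph V) (A : Finset V), r ≤ A.card →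
      (∃ B ⊆ A, s ≤ B.card ∧ ∀ a ∈ B, ∀ b ∈ B, a ≠ b → G.Adj a b) ∨
      (∃ B ⊆ A, t ≤ B.card ∧ ∀ a ∈ B, ∀ b ∈ B, ¬ G.Adj a b) := by
  intro k
  induction k with
  | zero =>
    intro s t h
    have hs : s = 0 := by omega
    exact ⟨0, fun G A _ => Or.inl ⟨∅, empty_subset _, by simp [hs], by simp⟩⟩
  | succ k ih =>
    intro s t h
    match s, t with
    | 0, t => exact ⟨0, fun G A _ => Or.inl ⟨∅, empty_subset _, by simp, by simp⟩⟩
    | s+1, 0 => exact ⟨0, fun G A _ => Or.inr ⟨∅, empty_subset _, by simp, by simp⟩⟩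
    | s+1, t+1 =>
      obtain ⟨r1, h1⟩ := ih s (t+1) (by omega)
      obtain ⟨r2, h2⟩ := ih (s+1) t (by omega)
      refine ⟨r1 + r2 + 1, fun {V} G A hA => ?_⟩
      classical
      obtain ⟨v, hv⟩ : A.Nonempty := card_pos.mp (by omega)
      set N := (A.erase v).filter (fun w => G.Adj v w) with hNdef
      set NN := (A.erase v).filter (fun w => ¬ G.Adj v w) with hNNdef
      have hcard : N.card + NN.card = (A.erase v).card :=
        card_filter_add_card_filter_not _
      have hAe : (A.erase v).card = A.card - 1 := card_erase_of_mem hv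
      have hNsubA : N ⊆ A := (filter_subset _ _).trans (erase_subset _ _)
      have hNNsubA : NN ⊆ A := (filter_subset _ _).trans (erase_subset _ _)
      have hor : r1 ≤ N.card ∨ r2 ≤ NN.card := by omega
      rcases hor with hN | hNN
      · rcases h1 G N hN with ⟨B, hBsub, hBcard, hB⟩ | ⟨B, hBsub, hBcard, hB⟩
        · left
          have hvB : v ∉ B := fun hvB => (mem_erase.mp (mem_of_mem_filter _ (hBsub hvB))).1 rfl
          refine ⟨insert v B, ?_, ?_, ?_⟩
          · exact insert_subset hv (hBsub.trans hNsubA)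
          · rw [card_insert_of_notMem hvB]; omega
          · intro a ha b hb hab
            rcases mem_insert.mp ha with rfl | ha'
            · rcases mem_insert.mp hb with rfl | hb'
              · exact absurd rfl hab
              · exact (mem_filter.mp (hBsub hb')).2
            · rcases mem_insert.mp hb with rfl | hb'
              · exact ((mem_filter.mp (hBsub ha')).2).symm
              · exact hB a ha' b hb' hab
        · exact Or.inr ⟨B, hBsub.trans hNsubA, hBcard, hB⟩
      · rcases h2 G NN hNN with ⟨B, hBsub, hBcard, hB⟩ | ⟨B, hBsub, hBcard, hB⟩
        · exact Or.inl ⟨B, hBsub.trans hNNsubA, hBcard, hB⟩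
        · right
          have hvB : v ∉ B := fun hvB => (mem_erase.mp (mem_of_mem_filter _ (hBsub hvB))).1 rfl
          refine ⟨insert v B, ?_, ?_, ?_⟩
          · exact insert_subset hv (hBsub.trans hNNsubA)
          · rw [card_insert_of_notMem hvB]; omega
          · intro a ha b hb
            rcases mem_insert.mp ha with rfl | ha'
            · rcases mem_insert.mp hb with rfl | hb'
              · exact G.irrefl
              · exact (mem_filter.mp (hBsub hb')).2
            · rcases mem_insert.mp hb with rfl | hb'
              · exact fun h' => (mem_filter.mp (hBsub ha')).2 h'.symm
              · exact hB a ha' b hb' 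

lemma turan_part_card (ℓ r : ℕ) (hℓ : 0 < ℓ) (i : ℕ) (hi : i < ℓ) :
    r ≤ (Finset.univ.filter (fun v : Fin (ℓ * r) => (v : ℕ) % ℓ = i)).card := by
  classical
  have hbound : ∀ j : Fin r, i + ℓ * (j : ℕ) < ℓ * r := by
    intro j
    have h1 : ℓ * ((j : ℕ) + 1) ≤ ℓ * r := Nat.mul_le_mul_left ℓ j.isLt
    have h2 : ℓ * ((j : ℕ) + 1) = ℓ * (j : ℕ) + ℓ := by ring
    omega
  have hcard := Finset.card_le_card_of_injOn
    (f := fun j : Fin r => (⟨i + ℓ * (j : ℕ), hbound j⟩ : Fin (ℓ * r)))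
    (s := Finset.univ)
    (t := Finset.univ.filter (fun v : Fin (ℓ * r) => (v : ℕ) % ℓ = i))
    (by
      intro j _
      simp only [mem_coe, mem_filter, mem_univ, true_and]
      show (i + ℓ * (j : ℕ)) % ℓ = i
      rw [Nat.add_mul_mod_self_left, Nat.mod_eq_of_lt hi])
    (by
      intro j _ j' _ h
      have : i + ℓ * (j : ℕ) = i + ℓ * (j' : ℕ) := congrArg Fin.val h
      have : ℓ * (j : ℕ) = ℓ * (j' : ℕ) := by omega
      exact Fin.ext (Nat.eq_of_mul_eq_mul_left hℓ this))
  simpa using hcard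

lemma key_lemma (F : Set ((m : ℕ) × SimpleGraph (Fin m)))
    (hm : ∃ p ∈ F, p.2 = (⊤ : SimpleGraph (Fin p.1)))
    (ℓ ℓ' : ℕ) (hℓ' : 0 < ℓ') (hle : ℓ' ≤ ℓ)
    (q : (m : ℕ) × SimpleGraph (Fin m)) (hqF : q ∈ F)
    (hq : IsCompleteMultipartite ℓ' q.2)
    (hS : ∀ n : ℕ, ∃ G ∈ ForbInd F n, HasCopy (SimpleGraph.turanGraph n ℓ) G) :
    False := by
  classical
  obtain ⟨p, hpF, hp⟩ := hm
  obtain ⟨c, hc⟩ := hq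
  obtain ⟨r, hr⟩ := my_ramsey (p.1 + q.1) p.1 q.1 le_rfl
  have hℓ : 0 < ℓ := lt_of_lt_of_le hℓ' hle
  obtain ⟨G, hG, f, hf⟩ := hS (ℓ * r)
  -- G has no p.1-clique
  have hclique : ∀ B : Finset (Fin (ℓ * r)), p.1 ≤ B.card →
      ¬ (∀ a ∈ B, ∀ b ∈ B, a ≠ b → G.Adj a b) := by
    intro B hB hcl
    obtain ⟨B', hB'sub, hB'card⟩ := Finset.exists_subset_card_eq hB
    apply hG p hpF
    refine ⟨(B'.orderEmbOfFin hB'card).toEmbedding, fun a b => ?_⟩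
    rw [hp]
    simp only [SimpleGraph.top_adj]
    constructor
    · intro hab
      exact hcl _ (hB'sub (Finset.orderEmbOfFin_mem _ _ _))
        _ (hB'sub (Finset.orderEmbOfFin_mem _ _ _))
        ((B'.orderEmbOfFin hB'card).toEmbedding.injective.ne hab)
    · intro hadj h
      subst h
      exact G.irrefl hadj
  -- the parts
  set P : Fin ℓ' → Finset (Fin (ℓ * r)) :=
    fun i => Finset.univ.filter (fun v : Fin (ℓ * r) => (v : ℕ) % ℓ = (i : ℕ)) with hP
  set A : Fin ℓ' → Finset (Fin (ℓ * r)) := fun i => (P i).map f with hAdef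
  have hA : ∀ i, r ≤ (A i).card := by
    intro i
    rw [hAdef]
    simp only [Finset.card_map]
    exact turan_part_card ℓ r hℓ (i : ℕ) (lt_of_lt_of_le i.isLt hle)
  have hBex : ∀ i : Fin ℓ', ∃ B, B ⊆ A i ∧ q.1 ≤ B.card ∧ ∀ a ∈ B, ∀ b ∈ B, ¬ G.Adj a b := by
    intro i
    rcases hr G (A i) (hA i) with ⟨B, hBsub, hBcard, hB⟩ | hok
    · exact absurd hB (hclique B hBcard)
    · exact hok
  choose B hBA hBcard hBind using hBex
  have hB'ex : ∀ i : Fin ℓ', ∃ B', B' ⊆ B i ∧ B'.card = q.1 :=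
    fun i => Finset.exists_subset_card_eq (hBcard i)
  choose B' hB'sub hB'card using hB'ex
  set e : (i : Fin ℓ') → Fin q.1 → Fin (ℓ * r) :=
    fun i => ((B' i).orderEmbOfFin (hB'card i)) with he
  have hmemB : ∀ i a, e i a ∈ B i := fun i a => hB'sub i (Finset.orderEmbOfFin_mem _ _ _)
  have hmemA : ∀ i a, e i a ∈ A i := fun i a => hBA i (hmemB i a)
  have hpart : ∀ (i : Fin ℓ') (a : Fin q.1), ∃ v : Fin (ℓ * r), (v : ℕ) % ℓ = (i : ℕ) ∧ f v = e i a := by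
    intro i a
    have := hmemA i a
    rw [hAdef, Finset.mem_map] at this
    obtain ⟨v, hv, hfv⟩ := this
    rw [hP, mem_filter] at hv
    exact ⟨v, hv.2, hfv⟩
  set g : Fin q.1 → Fin (ℓ * r) := fun a => e (c a) a with hg
  have hccases : ∀ a b, g a = g b → c a = c b := by
    intro a b hab
    by_contra hcc
    obtain ⟨v, hv, hfv⟩ := hpart (c a) a
    obtain ⟨w, hw, hfw⟩ := hpart (c b) b
    have hvw : v = w := f.injective (by rw [hfv, hfw]; exact hab)
    exact hcc (Fin.ext (by rw [← hv, ← hw, hvw]))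
  have ginj : Function.Injective g := by
    intro a b hab
    have hcc := hccases a b hab
    have : e (c a) a = e (c a) b := by
      rw [hg] at hab
      simpa [hcc] using hab
    exact ((B' (c a)).orderEmbOfFin (hB'card (c a))).toEmbedding.injective this
  have hiff : ∀ a b, q.2.Adj a b ↔ G.Adj (g a) (g b) := by
    intro a b
    rw [hc a b]
    constructor
    · intro hcc
      obtain ⟨v, hv, hfv⟩ := hpart (c a) a
      obtain ⟨w, hw, hfw⟩ := hpart (c b) b
      have hadj : (SimpleGraph.turanGraph (ℓ * r) ℓ).Adj v w := by
        show ((v : ℕ) % ℓ ≠ (w : ℕ) % ℓ)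
        rw [hv, hw]
        exact fun h => hcc (Fin.ext h)
      have := hf v w hadj
      rwa [hfv, hfw] at this
    · intro hadj hcab
      have h1 : g a ∈ B (c a) := hmemB (c a) a
      have h2 : g b ∈ B (c a) := by rw [hcab]; exact hmemB (c b) b
      exact hBind (c a) _ h1 _ h2 hadj
  exact hG q hqF ⟨⟨g, ginj⟩, hiff⟩

lemma turan_forb (F : Set ((m : ℕ) × SimpleGraph (Fin m))) (ℓ n : ℕ) (hℓ : 0 < ℓ)
    (h : ∀ p ∈ F, ¬ IsCompleteMultipartite ℓ p.2) :
    ∃ G ∈ ForbInd F n, HasCopy (SimpleGraph.turanGraph n ℓ) G := by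
  refine ⟨SimpleGraph.turanGraph n ℓ, ?_, ⟨Function.Embedding.refl _, fun a b hab => hab⟩⟩
  rintro p hp ⟨f, hf⟩
  apply h p hp
  refine ⟨fun v => ⟨(f v : ℕ) % ℓ, Nat.mod_lt _ hℓ⟩, fun v w => ?_⟩
  rw [hf v w]
  show ((f v : ℕ) % ℓ ≠ (f w : ℕ) % ℓ) ↔ _
  constructor
  · intro h1 h2
    exact h1 (congrArg Fin.val h2)
  · intro h1 h2
    exact h1 (Fin.ext h2)

lemma top_forb (F : Set ((m : ℕ) × SimpleGraph (Fin m)))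
    (hm : ¬ ∃ p ∈ F, p.2 = (⊤ : SimpleGraph (Fin p.1))) (ℓ n : ℕ) :
    ∃ G ∈ ForbInd F n, HasCopy (SimpleGraph.turanGraph n ℓ) G := by
  refine ⟨⊤, ?_, ⟨Function.Embedding.refl _, fun a b hab => ?_⟩⟩
  · rintro p hp ⟨f, hf⟩
    apply hm
    refine ⟨p, hp, ?_⟩
    ext a b
    rw [hf a b]
    simp [f.injective.ne_iff]
  · simpa using hab.ne

/-- If a family `F` of graphs contains a complete graph, then
`sup({ℓ ∈ ℕ₊ : ∀n ∃G ∈ Forb(F), T_{n,ℓ} ⊆ G} ∪ {0}) + 1` equals the least `ℓ ∈ ℕ₊` such that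
`F` contains a complete `ℓ`-partite graph; if `F` contains no complete graph, then for every
`ℓ` and `n` there is an `F`-induced-free graph on `n` vertices containing `T_{n,ℓ}`. -/
theorem stmt13 (F : Set ((m : ℕ) × SimpleGraph (Fin m))) :
    ((∃ p ∈ F, p.2 = (⊤ : SimpleGraph (Fin p.1))) →
      sSup (insert (0 : ℕ∞) ((fun ℓ : ℕ => (ℓ : ℕ∞)) ''
          {ℓ : ℕ | 0 < ℓ ∧ ∀ n : ℕ, ∃ G ∈ ForbInd F n,
            HasCopy (SimpleGraph.turanGraph n ℓ) G})) + 1 =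
        sInf ((fun ℓ : ℕ => (ℓ : ℕ∞)) ''
          {ℓ : ℕ | 0 < ℓ ∧ ∃ p ∈ F, IsCompleteMultipartite ℓ p.2})) ∧
    ((¬ ∃ p ∈ F, p.2 = (⊤ : SimpleGraph (Fin p.1))) →
      ∀ ℓ : ℕ, 0 < ℓ → ∀ n : ℕ, ∃ G ∈ ForbInd F n,
        HasCopy (SimpleGraph.turanGraph n ℓ) G) := by
  constructor
  · intro hm
    set M := {ℓ : ℕ | 0 < ℓ ∧ ∃ p ∈ F, IsCompleteMultipartite ℓ p.2} with hMdef
    set S := {ℓ : ℕ | 0 < ℓ ∧ ∀ n : ℕ, ∃ G ∈ ForbInd F n,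
      HasCopy (SimpleGraph.turanGraph n ℓ) G} with hSdef
    have hMne : M.Nonempty := by
      obtain ⟨p, hp, htop⟩ := hm
      refine ⟨p.1 + 1, Nat.succ_pos _, p, hp, ⟨fun v => Fin.castSucc v, fun v w => ?_⟩⟩
      rw [htop]
      simp [Fin.castSucc_inj]
    set L := sInf M with hLdef
    have hLM : L ∈ M := Nat.sInf_mem hMne
    have hLpos : 0 < L := hLM.1
    have hrhs : sInf ((fun ℓ : ℕ => (ℓ : ℕ∞)) '' M) = (L : ℕ∞) := by
      apply le_antisymm
      · exact sInf_le ⟨L, hLM, rfl⟩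
      · refine le_sInf ?_
        rintro x ⟨ℓ₀, hℓ₀, rfl⟩
        exact Nat.cast_le.mpr (Nat.sInf_le hℓ₀)
    have hSbound : ∀ ℓ₀ ∈ S, ℓ₀ ≤ L - 1 := by
      rintro ℓ₀ ⟨hpos, hall⟩
      by_contra hlt
      have hLle : L ≤ ℓ₀ := by omega
      obtain ⟨-, q, hqF, hq⟩ := hLM
      exact key_lemma F hm ℓ₀ L hLpos hLle q hqF hq hall
    have hsup : sSup (insert (0 : ℕ∞) ((fun ℓ : ℕ => (ℓ : ℕ∞)) '' S)) = ((L - 1 : ℕ) : ℕ∞) := by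
      apply le_antisymm
      · apply sSup_le
        rintro x hx
        rcases Set.mem_insert_iff.mp hx with rfl | ⟨ℓ₀, hℓ₀, rfl⟩
        · exact zero_le
        · exact Nat.cast_le.mpr (hSbound ℓ₀ hℓ₀)
      · by_cases hL1 : L = 1
        · rw [hL1]
          exact zero_le
        · have h2 : 2 ≤ L := by omega
          apply le_sSup
          refine Set.mem_insert_iff.mpr (Or.inr ⟨L - 1, ⟨by omega, fun n => ?_⟩, rfl⟩)
          apply turan_forb F (L - 1) n (by omega)
          intro p hp hcm
          have hmem : L - 1 ∈ M := ⟨by omega, p, hp, hcm⟩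
          have := Nat.sInf_le hmem
          omega
    rw [hsup, hrhs]
    have : L - 1 + 1 = L := by omega
    exact_mod_cast this
  · intro hm ℓ _ n
    exact top_forb F hm ℓ n
end

section
/- Let F be a family of ordered graphs (graphs equipped with a linear order on the vertex set), and let Forb⁺_<(F) be the class of ordered graphs containing no order-preserving non-induced copy of any member of F. Then for every ℓ ∈ ℕ₊: (for all n there exists an ordered graph in Forb⁺_<(F) on n vertices whose graph part contains a non-induced copy of T_{n,ℓ}) if and only if ℓ < χ_<(F), where χ_<(F) := inf{χ_<(F') : F' ∈ F} is the infimum of interval chromatic numbers. Consequently the abstract chromatic number equals max{χ_<(F), 1}. -/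
/-- The ordered graph `H` (on `Fin b` with its natural order) contains an order-preserving
non-induced copy of the ordered graph `G` (on `Fin a`). -/
def HasOrderedCopy {a b : ℕ} (G : SimpleGraph (Fin a)) (H : SimpleGraph (Fin b)) : Prop :=
  ∃ f : Fin a ↪ Fin b, StrictMono f ∧ ∀ v w, G.Adj v w → H.Adj (f v) (f w)

/-- The `n`-vertex ordered graphs containing no order-preserving non-induced copy of any member
of the family `F` of ordered graphs. -/
def ForbOrd (F : Set ((m : ℕ) × SimpleGraph (Fin m))) (n : ℕ) : Set (SimpleGraph (Fin n)) :=
  {G | ∀ p ∈ F, ¬ HasOrderedCopy p.2 G}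

/-- `c` is a proper interval coloring of the ordered graph `G`: it is a proper coloring whose
color classes are intervals of the linear order. -/
def IsIntervalColoring {m ℓ : ℕ} (G : SimpleGraph (Fin m)) (c : Fin m → Fin ℓ) : Prop :=
  (∀ v w, G.Adj v w → c v ≠ c w) ∧
    ∀ u v w : Fin m, u ≤ v → v ≤ w → c u = c w → c u = c v

/-- The interval chromatic number `χ_<` of an ordered graph. -/
noncomputable def intervalChromatic {m : ℕ} (G : SimpleGraph (Fin m)) : ℕ∞ :=
  sInf ((fun ℓ : ℕ => (ℓ : ℕ∞)) '' {ℓ : ℕ | ∃ c : Fin m → Fin ℓ, IsIntervalColoring G c})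

/-
If `ℓ < χ_<(F)`, order `T_{n,ℓ}` so that its parts are intervals (sort the vertices by residue):
an ordered copy of some `F' ∈ F` would inherit from the parts an interval colouring with `ℓ`
colours. Conversely, if some `F' ∈ F` on `m` vertices has an interval `ℓ`-colouring, then `F'`
sits inside the ordered complete `ℓ`-partite graph with `ℓ` consecutive blocks of size `m`, and
every ordering of `T_{n,ℓ}` with `n = ℓ²m` contains that block graph: greedily, the part that is
first to collect `m` vertices supplies the next block, and every other part loses at most `m`
vertices to it.
-/

open Finset SimpleGraph

theorem HasOrderedCopy.trans {a b c : ℕ} {G : SimpleGraph (Fin a)} {H : SimpleGraph (Fin b)}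
    {K : SimpleGraph (Fin c)} (hGH : HasOrderedCopy G H) (hHK : HasOrderedCopy H K) :
    HasOrderedCopy G K := by
  obtain ⟨f, hf, hfadj⟩ := hGH
  obtain ⟨g, hg, hgadj⟩ := hHK
  exact ⟨f.trans g, hg.comp hf, fun v w h => hgadj _ _ (hfadj v w h)⟩

theorem isIntervalColoring_of_monotone {m ℓ : ℕ} {G : SimpleGraph (Fin m)} {c : Fin m → Fin ℓ}
    (hmono : Monotone c) (hproper : ∀ v w, G.Adj v w → c v ≠ c w) : IsIntervalColoring G c :=
  ⟨hproper, fun _ _ _ huv hvw huw => le_antisymm (hmono huv) ((hmono hvw).trans_eq huw.symm)⟩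

theorem IsIntervalColoring.comp_injective {m ℓ ℓ' : ℕ} {G : SimpleGraph (Fin m)}
    {c : Fin m → Fin ℓ} (hc : IsIntervalColoring G c) {φ : Fin ℓ → Fin ℓ'}
    (hφ : Function.Injective φ) : IsIntervalColoring G (φ ∘ c) :=
  ⟨fun v w h => hφ.ne (hc.1 v w h),
    fun u v w huv hvw huw => congrArg φ (hc.2 u v w huv hvw (hφ huw))⟩

theorem intervalChromatic_le_iff {m ℓ : ℕ} {G : SimpleGraph (Fin m)} :
    intervalChromatic G ≤ ℓ ↔ ∃ c : Fin m → Fin ℓ, IsIntervalColoring G c := by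
  refine ⟨fun h => ?_, fun ⟨c, hc⟩ => sInf_le ⟨ℓ, ⟨c, hc⟩, rfl⟩⟩
  obtain ⟨_, ⟨ℓ', ⟨c, hc⟩, rfl⟩, hlt⟩ :=
    sInf_lt_iff.1 (h.trans_lt (ENat.lt_add_one_iff (ENat.natCast_ne_top ℓ) |>.2 le_rfl))
  have hℓ' : ℓ' ≤ ℓ := Nat.cast_le.1 ((ENat.lt_add_one_iff (ENat.natCast_ne_top ℓ)).1 hlt)
  exact ⟨Fin.castLE hℓ' ∘ c, hc.comp_injective (Fin.castLE_injective hℓ')⟩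

theorem exists_isIntervalColoring_of_iInf_le {F : Set ((m : ℕ) × SimpleGraph (Fin m))} {ℓ : ℕ}
    (h : ⨅ p ∈ F, intervalChromatic p.2 ≤ ℓ) :
    ∃ p ∈ F, ∃ c : Fin p.1 → Fin ℓ, IsIntervalColoring p.2 c := by
  have hlt := (ENat.lt_add_one_iff (ENat.natCast_ne_top ℓ)).2 h
  simp only [iInf_lt_iff] at hlt
  obtain ⟨p, hp, hpℓ⟩ := hlt
  exact ⟨p, hp, intervalChromatic_le_iff.1 ((ENat.lt_add_one_iff (ENat.natCast_ne_top ℓ)).1 hpℓ)⟩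

theorem comap_top_mem_forbOrd {F : Set ((m : ℕ) × SimpleGraph (Fin m))} {n ℓ : ℕ}
    {part : Fin n → Fin ℓ} (hpart : Monotone part)
    (hlt : (ℓ : ℕ∞) < ⨅ p ∈ F, intervalChromatic p.2) :
    (⊤ : SimpleGraph (Fin ℓ)).comap part ∈ ForbOrd F n := by
  rintro p hp ⟨f, hf, hadj⟩
  have hc : IsIntervalColoring p.2 (part ∘ f) :=
    isIntervalColoring_of_monotone (hpart.comp hf.monotone) hadj
  exact (hlt.trans_le (iInf₂_le p hp)).not_ge (intervalChromatic_le_iff.2 ⟨_, hc⟩)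

theorem exists_monotone_hasCopy_turanGraph {ℓ : ℕ} (hℓ : 0 < ℓ) (n : ℕ) :
    ∃ part : Fin n → Fin ℓ, Monotone part ∧
      HasCopy (turanGraph n ℓ) ((⊤ : SimpleGraph (Fin ℓ)).comap part) := by
  let residue : Fin n → Fin ℓ := fun v => ⟨v % ℓ, Nat.mod_lt _ hℓ⟩
  let σ := Tuple.sort residue
  refine ⟨residue ∘ σ, Tuple.monotone_sort residue, σ.symm.toEmbedding, fun v w h => ?_⟩
  simpa [residue, turanGraph, Fin.ext_iff] using h

theorem Nat.count_le_of_forall_count_lt {p : ℕ → Prop} [DecidablePred p] {t m : ℕ}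
    (h : ∀ s < t, Nat.count p s < m) : Nat.count p t ≤ m := by
  cases t with
  | zero => simp
  | succ s =>
    have := h s s.lt_succ_self
    rw [Nat.count_succ]
    split_ifs <;> omega

theorem exists_first_count_ge {κ : Type*} {P : κ → ℕ → Prop} [∀ k, DecidablePred (P k)]
    {A : Finset κ} {m b : ℕ} {k₀ : κ} (hk₀ : k₀ ∈ A) (hb : m ≤ Nat.count (P k₀) b) :
    ∃ t ≤ b, ∃ k ∈ A, m ≤ Nat.count (P k) t ∧ ∀ k' ∈ A, Nat.count (P k') t ≤ m := by
  have hex : ∃ t, ∃ k ∈ A, m ≤ Nat.count (P k) t := ⟨b, k₀, hk₀, hb⟩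
  obtain ⟨k, hk, hkt⟩ := Nat.find_spec hex
  refine ⟨Nat.find hex, Nat.find_min' hex ⟨k₀, hk₀, hb⟩, k, hk, hkt, fun k' hk' => ?_⟩
  exact Nat.count_le_of_forall_count_lt fun s hs =>
    not_le.1 fun h => Nat.find_min hex hs ⟨k', hk', h⟩

theorem strictMonoOn_ite_add {g f : ℕ → ℕ} {m M t : ℕ} (hg : StrictMonoOn g (Set.Iio m))
    (hgt : ∀ y < m, g y < t) (hf : StrictMonoOn f (Set.Iio M)) :
    StrictMonoOn (fun y => if y < m then g y else t + f (y - m)) (Set.Iio (m + M)) := by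
  intro a ha b hb hab
  simp only [Set.mem_Iio] at ha hb
  dsimp only
  split_ifs with ham hbm hbm
  · exact hg ham hbm hab
  · exact (hgt a ham).trans_le (Nat.le_add_right t _)
  · omega
  · exact Nat.add_lt_add_left (hf (by simp only [Set.mem_Iio]; omega)
      (by simp only [Set.mem_Iio]; omega) (by omega)) t

theorem exists_blocks_of_le_count {κ : Type*} [DecidableEq κ] (m j : ℕ) (P : κ → ℕ → Prop)
    [∀ k, DecidablePred (P k)] (A : Finset κ) (b : ℕ) (hj : j ≤ #A)
    (hA : ∀ k ∈ A, m * j ≤ Nat.count (P k) b) :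
    ∃ f : ℕ → ℕ, ∃ σ : Fin j → κ, StrictMonoOn f (Set.Iio (m * j)) ∧
      Function.Injective σ ∧ (∀ i, σ i ∈ A) ∧
      ∀ i : Fin j, ∀ r < m, f (m * i + r) < b ∧ P (σ i) (f (m * i + r)) := by
  induction j generalizing P A b with
  | zero =>
    exact ⟨id, Fin.elim0, fun a ha => by simp at ha, fun i => i.elim0, fun i => i.elim0,
      fun i => i.elim0⟩
  | succ j ih =>
    obtain ⟨k₀, hk₀⟩ := card_pos.1 (by omega : 0 < #A)
    obtain ⟨t, htb, k, hk, hkt, hle⟩ :=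
      exists_first_count_ge hk₀ ((Nat.le_mul_of_pos_right m j.succ_pos).trans (hA k₀ hk₀))
    have hrest : ∀ k' ∈ A.erase k, m * j ≤ Nat.count (fun y => P k' (t + y)) (b - t) := by
      intro k' hk'
      have hb := hA k' (mem_of_mem_erase hk')
      rw [← Nat.add_sub_cancel' htb, Nat.count_add] at hb
      have := hle k' (mem_of_mem_erase hk')
      rw [Nat.mul_succ] at hb
      omega
    obtain ⟨f, σ, hf, hσ, hσA, hfP⟩ := ih (fun k' y => P k' (t + y)) (A.erase k) (b - t)
      (by rw [card_erase_of_mem hk]; omega) hrest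
    have hcard : ∀ y < m, ∀ hfin : (Set.ofPred (P k)).Finite, y < #hfin.toFinset :=
      fun y hy hfin => (hy.trans_le hkt).trans_le (Nat.count_le_card hfin t)
    have hnth_lt : ∀ y < m, Nat.nth (P k) y < t :=
      fun y hy => Nat.nth_lt_of_lt_count (hy.trans_le hkt)
    refine ⟨fun y => if y < m then Nat.nth (P k) y else t + f (y - m), Fin.cons k σ,
      ?_, ?_, ?_, ?_⟩
    · rw [Nat.mul_succ, add_comm]
      exact strictMonoOn_ite_add (fun a _ b hb hab => Nat.nth_lt_nth' hab (hcard b hb))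
        hnth_lt hf
    · refine Fin.cons_injective_iff.2 ⟨?_, hσ⟩
      rintro ⟨i, hi⟩
      exact ne_of_mem_erase (hσA i) hi
    · exact Fin.cases hk fun i => mem_of_mem_erase (hσA i)
    · refine Fin.cases (fun r hr => ?_) (fun i r hr => ?_)
      · simp only [Fin.val_zero, mul_zero, zero_add, Fin.cons_zero, if_pos hr]
        exact ⟨(hnth_lt r hr).trans_le htb, Nat.nth_mem r (hcard r hr)⟩
      · have hshift : m * (i + 1 : ℕ) + r - m = m * i + r := by rw [Nat.mul_succ]; omega
        have hge : ¬ m * (i + 1 : ℕ) + r < m := by rw [Nat.mul_succ]; omega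
        simp only [Fin.val_succ, Fin.cons_succ, if_neg hge, hshift]
        exact ⟨by have := (hfP i r hr).1; omega, (hfP i r hr).2⟩

theorem count_mod_eq_mul {ℓ k : ℕ} (hk : k < ℓ) (M : ℕ) :
    Nat.count (· % ℓ = k) (ℓ * M) = M := by
  have := Nat.count_modEq_card (ℓ * M) (k.zero_le.trans_lt hk) k
  simp only [Nat.ModEq, Nat.mod_eq_of_lt hk, Nat.mul_mod_right, Nat.not_lt_zero, if_false,
    add_zero, Nat.mul_div_cancel_left M (k.zero_le.trans_lt hk)] at this
  exact this

theorem card_image_Iic_lt_of_ne {α β : Type*} [Preorder α] [LocallyFiniteOrderBot α]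
    [DecidableEq β] {c : α → β} (hc : ∀ u v w, u ≤ v → v ≤ w → c u = c w → c u = c v)
    {v w : α} (hvw : v ≤ w) (hne : c v ≠ c w) : #((Iic v).image c) < #((Iic w).image c) := by
  refine card_lt_card ((ssubset_iff_of_subset (image_subset_image (Iic_subset_Iic.2 hvw))).2
    ⟨c w, mem_image_of_mem c (mem_Iic.2 le_rfl), ?_⟩)
  simp only [mem_image, mem_Iic, not_exists, not_and]
  exact fun u huv huw => hne ((hc u v w huv hvw huw).symm.trans huw)

/-- The ordered complete `ℓ`-partite graph whose parts are `ℓ` consecutive intervals of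
length `m`. -/
def blockGraph (m ℓ : ℕ) : SimpleGraph (Fin (m * ℓ)) :=
  (⊤ : SimpleGraph ℕ).comap fun y => (y : ℕ) / m

theorem count_le_count_exists_eq {N : ℕ} {g : Fin N → Fin N} (hg : Function.Injective g)
    (q : ℕ → Prop) [DecidablePred q] :
    Nat.count q N ≤ Nat.count (fun y => ∃ v : Fin N, q v ∧ (g v : ℕ) = y) N := by
  rw [Nat.count_eq_card_filter_range, Nat.count_eq_card_filter_range]
  refine card_le_card_of_injOn (fun v => if h : v < N then (g ⟨v, h⟩ : ℕ) else 0)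
    (fun v hv => ?_) (fun v hv w hw hvw => ?_)
  · simp only [coe_filter, mem_range, Set.mem_ofPred_eq] at hv ⊢
    rw [dif_pos hv.1]
    exact ⟨(g _).2, ⟨v, hv.1⟩, hv.2, rfl⟩
  · simp only [coe_filter, mem_range, Set.mem_ofPred_eq] at hv hw hvw
    rw [dif_pos hv.1, dif_pos hw.1] at hvw
    exact Fin.mk.inj_iff.1 (hg (Fin.ext hvw))

theorem HasCopy.hasOrderedCopy_blockGraph {m ℓ : ℕ} {G : SimpleGraph (Fin (ℓ * (m * ℓ)))}
    (hG : HasCopy (turanGraph (ℓ * (m * ℓ)) ℓ) G) : HasOrderedCopy (blockGraph m ℓ) G := by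
  obtain ⟨g, hg⟩ := hG
  have hcount : ∀ k ∈ range ℓ, m * ℓ ≤
      Nat.count (fun y => ∃ v : Fin (ℓ * (m * ℓ)), (v : ℕ) % ℓ = k ∧ (g v : ℕ) = y) (ℓ * (m * ℓ)) :=
    fun k hk => (count_mod_eq_mul (mem_range.1 hk) (m * ℓ)).ge.trans
      (count_le_count_exists_eq g.injective _)
  obtain ⟨f, σ, hf, hσ, -, hfP⟩ :=
    exists_blocks_of_le_count m ℓ _ (range ℓ) _ (card_range ℓ).ge hcount
  have hblock : ∀ y : Fin (m * ℓ), f y < ℓ * (m * ℓ) ∧ ∃ v : Fin (ℓ * (m * ℓ)),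
      (v : ℕ) % ℓ = σ ⟨y / m, Nat.div_lt_of_lt_mul y.2⟩ ∧ (g v : ℕ) = f y := by
    intro y
    have hm : 0 < m := Nat.pos_of_mul_pos_right y.pos
    simpa only [Nat.div_add_mod] using
      hfP ⟨y / m, Nat.div_lt_of_lt_mul y.2⟩ (y % m) (Nat.mod_lt _ hm)
  let e : Fin (m * ℓ) → Fin (ℓ * (m * ℓ)) := fun y => ⟨f y, (hblock y).1⟩
  have he : StrictMono e := fun a b hab => hf a.2 b.2 hab
  refine ⟨⟨e, he.injective⟩, he, fun y y' hyy' => ?_⟩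
  obtain ⟨v, hv, hvy⟩ := (hblock y).2
  obtain ⟨w, hw, hwy⟩ := (hblock y').2
  simp only [blockGraph, comap_adj, top_adj] at hyy'
  change G.Adj (e y) (e y')
  rw [show e y = g v from Fin.ext hvy.symm, show e y' = g w from Fin.ext hwy.symm]
  exact hg v w (by simpa only [turanGraph, hv, hw] using hσ.ne (Fin.ne_of_val_ne hyy'))

theorem IsIntervalColoring.exists_monotone {m ℓ : ℕ} {G : SimpleGraph (Fin m)}
    {c : Fin m → Fin ℓ} (hc : IsIntervalColoring G c) :
    ∃ d : Fin m → ℕ, Monotone d ∧ (∀ v, d v < ℓ) ∧ ∀ v w, G.Adj v w → d v ≠ d w := by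
  have hpos : ∀ v, 0 < #((Iic v).image c) := fun v => card_pos.2 (nonempty_Iic.image c)
  refine ⟨fun v => #((Iic v).image c) - 1, fun v w hvw => ?_, fun v => ?_, fun v w hvw => ?_⟩
  · exact Nat.sub_le_sub_right (card_le_card (image_subset_image (Iic_subset_Iic.2 hvw))) 1
  · have := card_le_univ ((Iic v).image c)
    rw [Fintype.card_fin] at this
    have := hpos v
    dsimp only
    omega
  · dsimp only
    have := hpos v
    have := hpos w
    rcases le_total v w with hle | hle
    · have := card_image_Iic_lt_of_ne hc.2 hle (hc.1 v w hvw)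
      omega
    · have := card_image_Iic_lt_of_ne hc.2 hle (hc.1 v w hvw).symm
      omega

theorem IsIntervalColoring.hasOrderedCopy_blockGraph {m ℓ : ℕ} {G : SimpleGraph (Fin m)}
    {c : Fin m → Fin ℓ} (hc : IsIntervalColoring G c) : HasOrderedCopy G (blockGraph m ℓ) := by
  obtain ⟨d, hd_mono, hd_lt, hd_ne⟩ := hc.exists_monotone
  let h : Fin m → Fin (m * ℓ) := fun v => ⟨v + m * d v, by
    have := Nat.mul_le_mul_left m (hd_lt v)
    rw [Nat.mul_succ] at this
    omega⟩
  have hh : StrictMono h := fun v w hvw =>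
    Nat.add_lt_add_of_lt_of_le hvw (Nat.mul_le_mul_left m (hd_mono hvw.le))
  have hdiv : ∀ v, (h v : ℕ) / m = d v := fun v => by
    change (v + m * d v) / m = d v
    rw [Nat.add_mul_div_left _ _ v.pos, Nat.div_eq_of_lt v.2, zero_add]
  refine ⟨⟨h, hh.injective⟩, hh, fun v w hvw => ?_⟩
  simp only [blockGraph, comap_adj, top_adj, Function.Embedding.coeFn_mk, hdiv]
  exact hd_ne v w hvw

theorem forall_exists_forbOrd_hasCopy_iff (F : Set ((m : ℕ) × SimpleGraph (Fin m))) {ℓ : ℕ}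
    (hℓ : 0 < ℓ) :
    (∀ n : ℕ, ∃ G ∈ ForbOrd F n, HasCopy (turanGraph n ℓ) G) ↔
      (ℓ : ℕ∞) < ⨅ p ∈ F, intervalChromatic p.2 := by
  refine ⟨fun h => ?_, fun h n => ?_⟩
  · by_contra hle
    obtain ⟨p, hp, c, hc⟩ := exists_isIntervalColoring_of_iInf_le (not_lt.1 hle)
    obtain ⟨G, hG, hT⟩ := h (ℓ * (p.1 * ℓ))
    exact hG p hp (hc.hasOrderedCopy_blockGraph.trans hT.hasOrderedCopy_blockGraph)
  · obtain ⟨part, hpart, hT⟩ := exists_monotone_hasCopy_turanGraph hℓ n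
    exact ⟨_, comap_top_mem_forbOrd hpart h, hT⟩

theorem sSup_insert_zero_image_lt_add_one (χ : ℕ∞) :
    sSup (insert (0 : ℕ∞) ((fun ℓ : ℕ => (ℓ : ℕ∞)) '' {ℓ : ℕ | 0 < ℓ ∧ (ℓ : ℕ∞) < χ})) + 1 =
      max χ 1 := by
  induction χ using ENat.recTopCoe with
  | top =>
    suffices h : sSup (insert (0 : ℕ∞) ((fun ℓ : ℕ => (ℓ : ℕ∞)) ''
        {ℓ : ℕ | 0 < ℓ ∧ (ℓ : ℕ∞) < ⊤})) = ⊤ by rw [h, top_add, max_eq_left le_top]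
    refine sSup_eq_top.2 fun b hb => ?_
    lift b to ℕ using hb.ne
    exact ⟨(b + 1 : ℕ), Set.mem_insert_of_mem _ ⟨b + 1, ⟨b.succ_pos, ENat.natCast_lt_top _⟩, rfl⟩,
      by exact_mod_cast b.lt_succ_self⟩
  | coe k =>
    -- for `k ≤ 1` the truncated `k - 1` is the inserted `0`
    have hmax : IsGreatest (insert (0 : ℕ∞) ((fun ℓ : ℕ => (ℓ : ℕ∞)) ''
        {ℓ : ℕ | 0 < ℓ ∧ (ℓ : ℕ∞) < k})) ((k - 1 : ℕ) : ℕ∞) := by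
      refine ⟨?_, ?_⟩
      · rcases Nat.lt_or_ge 1 k with hk | hk
        · exact Set.mem_insert_of_mem _ ⟨k - 1, ⟨by omega, by exact_mod_cast (by omega)⟩, rfl⟩
        · simp [Nat.sub_eq_zero_of_le hk]
      · rintro _ (rfl | ⟨ℓ, ⟨-, hℓk⟩, rfl⟩)
        · exact zero_le
        · have : ℓ < k := by exact_mod_cast hℓk
          exact Nat.cast_le.2 (by omega : ℓ ≤ k - 1)
    rw [hmax.isLUB.sSup_eq]
    rcases k with _ | k <;> simp

/-- For a family `F` of ordered graphs and each `ℓ ∈ ℕ₊`: every size `n` admits an ordered graph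
in `Forb⁺_<(F)` whose graph part contains a (not necessarily order-preserving) copy of the Turán
graph `T_{n,ℓ}` iff `ℓ < χ_<(F) := inf_{F' ∈ F} χ_<(F')`; consequently, the abstract chromatic
number equals `max {χ_<(F), 1}`. -/
theorem stmt16 (F : Set ((m : ℕ) × SimpleGraph (Fin m))) :
    (∀ ℓ : ℕ, 0 < ℓ →
      ((∀ n : ℕ, ∃ G ∈ ForbOrd F n, HasCopy (SimpleGraph.turanGraph n ℓ) G) ↔
        (ℓ : ℕ∞) < ⨅ p ∈ F, intervalChromatic p.2)) ∧
    sSup (insert (0 : ℕ∞) ((fun ℓ : ℕ => (ℓ : ℕ∞)) ''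
        {ℓ : ℕ | 0 < ℓ ∧ ∀ n : ℕ, ∃ G ∈ ForbOrd F n,
          HasCopy (SimpleGraph.turanGraph n ℓ) G})) + 1 =
      max (⨅ p ∈ F, intervalChromatic p.2) 1 := by
  have hset : {ℓ : ℕ | 0 < ℓ ∧ ∀ n : ℕ, ∃ G ∈ ForbOrd F n, HasCopy (turanGraph n ℓ) G} =
      {ℓ : ℕ | 0 < ℓ ∧ (ℓ : ℕ∞) < ⨅ p ∈ F, intervalChromatic p.2} :=
    Set.ext fun ℓ => and_congr_right (forall_exists_forbOrd_hasCopy_iff F)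
  refine ⟨fun ℓ hℓ => forall_exists_forbOrd_hasCopy_iff F hℓ, ?_⟩
  rw [hset]
  exact sSup_insert_zero_image_lt_add_one _
end

section
/- Fix ℓ ∈ ℕ₊ and a finite relational language L with a distinguished binary symbol E. If for some ℓ there exists an E-Turán ℓ-Ramsey pattern Q not belonging to the Ramsey uniformity set U_ℓ(F) of a family F, then for every ℓ' ≤ ℓ there exists an E-Turán ℓ'-Ramsey pattern Q' not in U_{ℓ'}(F). Consequently the set {ℓ ∈ ℕ₊ : every E-Turán ℓ-Ramsey pattern lies in U_ℓ(F)} is upward closed in ℕ₊. -/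
open FirstOrder Language

/-- `(f, r)` is an `ℓ`-split order on `V`: `r` is a partial order in which two elements are
comparable exactly when they have equal `f`-values. -/
def IsSplitOrder {V : Type*} {ℓ : ℕ} (f : V → Fin ℓ) (r : V → V → Prop) : Prop :=
  IsPartialOrder V r ∧ ∀ v w : V, f v = f w ↔ (r v w ∨ r w v)

/-- An `ℓ`-Ramsey pattern on a relational language `L`: to each predicate of each arity `k` it
assigns a set of candidate `ℓ`-split orders on `Fin k`, encoded as pairs `(g, ⪯)`. -/
def RamseyPattern (L : Language) (ℓ : ℕ) : Type _ :=
  ∀ k : ℕ, L.Relations k → Set ((Fin k → Fin ℓ) × (Fin k → Fin k → Prop))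

/-- All members of the pattern are genuine split orders. -/
def RamseyPattern.IsProper {L : Language} {ℓ : ℕ} (Q : RamseyPattern L ℓ) : Prop :=
  ∀ (k : ℕ) (R : L.Relations k) (p), p ∈ Q k R → IsSplitOrder p.1 p.2

/-- The pattern is `E`-Turán: its value at `E` is exactly the set of `ℓ`-split orders on
`Fin 2` with injective part function. -/
def RamseyPattern.IsTuran {L : Language} {ℓ : ℕ} (E : L.Relations 2)
    (Q : RamseyPattern L ℓ) : Prop :=
  Q 2 E = {p | Function.Injective p.1 ∧ IsSplitOrder p.1 p.2}

/-- A (canonical) structure on the relational language `L`. -/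
structure Struc (L : Language) where
  V : Type
  rel : ∀ {k : ℕ}, L.Relations k → (Fin k → V) → Prop

/-- `M` is `Q`-uniform with respect to the `ℓ`-split order `(f, r)` on its vertex set. -/
def IsUniform {L : Language} {ℓ : ℕ} (M : Struc L) (Q : RamseyPattern L ℓ)
    (f : M.V → Fin ℓ) (r : M.V → M.V → Prop) : Prop :=
  ∀ (k : ℕ) (R : L.Relations k) (α : Fin k → M.V), Function.Injective α →
    (M.rel R α ↔ (f ∘ α, fun i j => r (α i) (α j)) ∈ Q k R)

/-- The `ℓ`-Ramsey uniformity set `U_ℓ(F)` of a family `F` of structures. -/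
def uniformitySet {L : Language} (ℓ : ℕ) (F : Set (Struc L)) : Set (RamseyPattern L ℓ) :=
  {Q | ∃ M ∈ F, ∃ (f : M.V → Fin ℓ) (r : M.V → M.V → Prop),
    IsSplitOrder f r ∧ IsUniform M Q f r}

lemma splitOrder_comp {V : Type*} {ℓ ℓ' : ℕ} (e : Fin ℓ' → Fin ℓ) (he : Function.Injective e)
    (f : V → Fin ℓ') (r : V → V → Prop) :
    IsSplitOrder (e ∘ f) r ↔ IsSplitOrder f r := by
  unfold IsSplitOrder
  simp only [Function.comp_apply, he.eq_iff]

lemma key_s19 {L : Language} (E : L.Relations 2) (F : Set (Struc L)) {ℓ ℓ' : ℕ} (hle : ℓ' ≤ ℓ)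
    (h : ∃ Q : RamseyPattern L ℓ, Q.IsProper ∧ Q.IsTuran E ∧ Q ∉ uniformitySet ℓ F) :
    ∃ Q' : RamseyPattern L ℓ', Q'.IsProper ∧ Q'.IsTuran E ∧ Q' ∉ uniformitySet ℓ' F := by
  obtain ⟨Q, hprop, hturan, hnot⟩ := h
  have hcast : Function.Injective (Fin.castLE hle) := Fin.castLE_injective hle
  refine ⟨fun k R => {p | (Fin.castLE hle ∘ p.1, p.2) ∈ Q k R}, ?_, ?_, ?_⟩
  · intro k R p hp
    exact (splitOrder_comp _ hcast p.1 p.2).mp (hprop k R _ hp)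
  · ext p
    have := Set.ext_iff.mp hturan (Fin.castLE hle ∘ p.1, p.2)
    simp only [Set.mem_setOf_eq] at this ⊢
    rw [this]
    constructor
    · rintro ⟨h1, h2⟩
      exact ⟨fun a b hab => h1 (congrArg (Fin.castLE hle) hab),
        (splitOrder_comp _ hcast p.1 p.2).mp h2⟩
    · rintro ⟨h1, h2⟩
      exact ⟨hcast.comp h1, (splitOrder_comp _ hcast p.1 p.2).mpr h2⟩
  · rintro ⟨M, hM, f, r, hso, hu⟩
    refine hnot ⟨M, hM, Fin.castLE hle ∘ f, r, (splitOrder_comp _ hcast f r).mpr hso, ?_⟩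
    intro k R α hα
    exact hu k R α hα

/-- If some `E`-Turán `ℓ`-Ramsey pattern avoids `U_ℓ(F)`, then for every positive `ℓ' ≤ ℓ` some
`E`-Turán `ℓ'`-Ramsey pattern avoids `U_{ℓ'}(F)`; consequently
`{ℓ ∈ ℕ₊ : every E-Turán ℓ-pattern lies in U_ℓ(F)}` is upward closed. -/
theorem stmt19 {L : Language} [∀ n, Finite (L.Relations n)] (E : L.Relations 2)
    (F : Set (Struc L)) (ℓ ℓ' : ℕ) (hℓ' : 0 < ℓ') (hle : ℓ' ≤ ℓ)
    (h : ∃ Q : RamseyPattern L ℓ, Q.IsProper ∧ Q.IsTuran E ∧ Q ∉ uniformitySet ℓ F) :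
    (∃ Q' : RamseyPattern L ℓ', Q'.IsProper ∧ Q'.IsTuran E ∧ Q' ∉ uniformitySet ℓ' F) ∧
    ∀ ℓ₁ ℓ₂ : ℕ, 0 < ℓ₁ → ℓ₁ ≤ ℓ₂ →
      (∀ Q : RamseyPattern L ℓ₁, Q.IsProper → Q.IsTuran E → Q ∈ uniformitySet ℓ₁ F) →
      (∀ Q : RamseyPattern L ℓ₂, Q.IsProper → Q.IsTuran E → Q ∈ uniformitySet ℓ₂ F) := by
  refine ⟨key_s19 E F hle h, ?_⟩
  intro ℓ₁ ℓ₂ h1 h12 hall Q hp ht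
  by_contra hn
  obtain ⟨Q', hp', ht', hn'⟩ := key_s19 E F h12 ⟨Q, hp, ht, hn⟩
  exact hn' (hall Q' hp' ht')
end
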